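/- Fix z(0) ∈ D and for each d ≥ 1 let (z^{(d)}(t))_{t≥0} be the unique solution of the truncated system ẋ = u^{(d)}(x) in D(d) starting from (z_1(0),…,z_d(0),0,0,…). Then: (i) for every d ≥ 1, z^{(d)}_k(t) ≤ z^{(d+1)}_k(t) for all 1 ≤ k ≤ d and all t ≥ 0; and (ii) if (w(t))_{t≥0} is any solution of ẇ = v(w) in D with z_k(0) ≤ w_k(0) for all k ≥ 1, then z^{(d)}_k(t) ≤ w_k(t) for all 1 ≤ k ≤ d and all t ≥ 0. -/

import Mathlib

open Filter

noncomputable section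

/-- `pcoef n z j` is `p_j(z) = n (z_j - z_{j+1}) z_{j+1}^(n-1)`. -/
def pcoef (n : ℕ) (z : ℕ → ℝ) (j : ℕ) : ℝ :=
  (n : ℝ) * (z j - z (j + 1)) * z (j + 1) ^ (n - 1)

/-- The `j`-th factor `z_{j+1}^n / (1 - p_j(z))` of `μ(z,·)`,
with the convention that a factor of the form `0/0` equals `1`. -/
def muFactor (n : ℕ) (z : ℕ → ℝ) (j : ℕ) : ℝ :=
  if z (j + 1) ^ n = 0 ∧ 1 - pcoef n z j = 0 then 1
  else z (j + 1) ^ n / (1 - pcoef n z j)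

/-- `mu n z k` is `μ(z,k) = ∏_{j=1}^k z_j^n / (1 - p_{j-1}(z))`. -/
def mu (n : ℕ) (z : ℕ → ℝ) (k : ℕ) : ℝ :=
  ∏ j ∈ Finset.range k, muFactor n z j

/-- The vector field `v_k(z) = λ z_{k-1}^n μ(z,k-1) - λ z_k^n μ(z,k) - (z_k - z_{k+1})`,
meaningful for `k ≥ 1`. -/
def vfield (lam : ℝ) (n : ℕ) (z : ℕ → ℝ) (k : ℕ) : ℝ :=
  lam * z (k - 1) ^ n * mu n z (k - 1) - lam * z k ^ n * mu n z k - (z k - z (k + 1))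

/-- Membership in `D`: non-increasing `[0,1]`-valued summable sequences,
with the convention `z 0 = 1`. -/
def memD (z : ℕ → ℝ) : Prop :=
  z 0 = 1 ∧ (∀ k, z (k + 1) ≤ z k) ∧ (∀ k, 0 ≤ z k ∧ z k ≤ 1) ∧
    Summable (fun k => z (k + 1))

/-- A solution of `ż = v(z)` in `D`: a family of functions `z k : [0,∞) → [0,1]`,
lying in `D` at each time `t ≥ 0`, differentiable with derivative `v_k(z(t))` for `k ≥ 1`. -/
def IsSolution (lam : ℝ) (n : ℕ) (z : ℕ → ℝ → ℝ) : Prop :=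
  (∀ t : ℝ, 0 ≤ t → memD (fun k => z k t)) ∧
  (∀ k : ℕ, 1 ≤ k → ∀ t : ℝ, 0 ≤ t →
    HasDerivWithinAt (z k) (vfield lam n (fun j => z j t) k) (Set.Ici 0) t)

/-- Membership in `D(d)`: `0 ≤ x_d ≤ ⋯ ≤ x_1 ≤ 1` and `x_k = 0` for `k > d`,
with the convention `x 0 = 1`. -/
def memDd (d : ℕ) (x : ℕ → ℝ) : Prop :=
  x 0 = 1 ∧ (∀ k, x (k + 1) ≤ x k) ∧ (∀ k, 0 ≤ x k ∧ x k ≤ 1) ∧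
    (∀ k, d < k → x k = 0)

/-- The truncated vector field `u = u^(d)`. -/
def ufield (lam : ℝ) (n : ℕ) (d : ℕ) (x : ℕ → ℝ) (k : ℕ) : ℝ :=
  if k < d then vfield lam n x k
  else if k = d then
    lam * x (d - 1) ^ n * mu n x (d - 1) - lam * x d ^ n * mu n x d - x d
  else 0

/-- A solution of the truncated system `ẋ = u^(d)(x)` in `D(d)`. -/
def IsSolutionTrunc (lam : ℝ) (n : ℕ) (d : ℕ) (x : ℕ → ℝ → ℝ) : Prop :=
  (∀ t : ℝ, 0 ≤ t → memDd d (fun k => x k t)) ∧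
  (∀ k : ℕ, 1 ≤ k → ∀ t : ℝ, 0 ≤ t →
    HasDerivWithinAt (x k) (ufield lam n d (fun j => x j t) k) (Set.Ici 0) t)


set_option maxHeartbeats 1000000

open Set Topology

/-- good sequences: the comparison domain -/
def gseq (x : ℕ → ℝ) : Prop :=
  x 0 = 1 ∧ (∀ k, x (k + 1) ≤ x k) ∧ (∀ k, 0 ≤ x k)

namespace gseq

theorem anti {x : ℕ → ℝ} (hx : gseq x) : ∀ {j k : ℕ}, j ≤ k → x k ≤ x j := by
  intro j k hjk
  induction k, hjk using Nat.le_induction with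
  | base => exact le_refl _
  | succ m hm ih => exact (hx.2.1 m).trans ih

theorem le_one {x : ℕ → ℝ} (hx : gseq x) (k : ℕ) : x k ≤ 1 := by
  simpa [hx.1] using hx.anti (Nat.zero_le k)

theorem nonneg {x : ℕ → ℝ} (hx : gseq x) (k : ℕ) : 0 ≤ x k := hx.2.2 k

end gseq

section Basic

variable {n : ℕ} (hn : 1 ≤ n)

/-- Bernoulli-type estimate: `n b^(n-1) (a-b) ≤ a^n - b^n`. -/
theorem nmul_le {a b : ℝ} (h0 : 0 ≤ b) (hba : b ≤ a) (hn : 1 ≤ n) :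
    (n : ℝ) * b ^ (n - 1) * (a - b) ≤ a ^ n - b ^ n := by
  rcases eq_or_lt_of_le h0 with h | hb
  · rcases Nat.exists_eq_add_of_le hn with ⟨m, rfl⟩
    rcases Nat.eq_zero_or_pos m with rfl | hm
    · simp [← h]
    · rw [← h]
      have h1 : (0:ℝ) ^ (1 + m - 1) = 0 := by
        rw [zero_pow]; omega
      have h2 : (0:ℝ) ^ (1 + m) = 0 := by
        rw [zero_pow]; omega
      rw [h1, h2]
      have : (0:ℝ) ≤ a ^ (1 + m) := pow_nonneg (le_trans h0 hba) _
      nlinarith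
  · have hab : (0:ℝ) ≤ a / b := div_nonneg (le_trans h0 hba) hb.le
    have hber : 1 + (n:ℝ) * (a / b - 1) ≤ (a / b) ^ n := by
      have := one_add_mul_le_pow (by linarith : (-2:ℝ) ≤ a / b - 1) n
      simpa using this
    have hbn : (0:ℝ) < b ^ n := pow_pos hb n
    have hdiv : (a / b) ^ n = a ^ n / b ^ n := div_pow a b n
    rw [hdiv] at hber
    have := mul_le_mul_of_nonneg_right hber hbn.le
    rw [div_mul_cancel₀ _ hbn.ne'] at this
    have hsplit : b ^ n = b ^ (n - 1) * b := by
      conv_lhs => rw [show n = (n-1) + 1 by omega]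
      rw [pow_succ]
    calc (n : ℝ) * b ^ (n - 1) * (a - b) = (1 + (n:ℝ) * (a / b - 1)) * b ^ n - b ^ n := by
          rw [hsplit]; field_simp; ring
      _ ≤ a ^ n - b ^ n := by linarith

/-- The other side: `a^n - b^n ≤ n a^(n-1) (a-b)`. -/
theorem nmul_ge {a b : ℝ} (h0 : 0 ≤ b) (hba : b ≤ a) (hn : 1 ≤ n) :
    a ^ n - b ^ n ≤ (n : ℝ) * a ^ (n - 1) * (a - b) := by
  rcases eq_or_lt_of_le (le_trans h0 hba) with h | ha
  · have hb : b = 0 := le_antisymm (h ▸ hba) h0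
    rw [← h, hb]
    simp
  · have hab : (-2:ℝ) ≤ b / a - 1 := by
      have : (0:ℝ) ≤ b / a := div_nonneg h0 ha.le
      linarith
    have hber : 1 + (n:ℝ) * (b / a - 1) ≤ (b / a) ^ n := by
      have := one_add_mul_le_pow hab n
      simpa using this
    have han : (0:ℝ) < a ^ n := pow_pos ha n
    rw [div_pow] at hber
    have := mul_le_mul_of_nonneg_right hber han.le
    rw [div_mul_cancel₀ _ han.ne'] at this
    have hsplit : a ^ n = a ^ (n - 1) * a := by
      conv_lhs => rw [show n = (n-1) + 1 by omega]
      rw [pow_succ]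
    calc a ^ n - b ^ n ≤ a ^ n - (1 + (n:ℝ) * (b / a - 1)) * a ^ n := by linarith
      _ = (n : ℝ) * a ^ (n - 1) * (a - b) := by
          rw [hsplit]; field_simp; ring

end Basic

section Pair

variable {n : ℕ}

/-- For `0 ≤ b ≤ a ≤ 1`: `n (a-b) b^(n-1) ≤ a^n - b^n`. -/
theorem pair_pcoef_le {a b : ℝ} (hn : 1 ≤ n) (h0 : 0 ≤ b) (hba : b ≤ a) :
    (n : ℝ) * (a - b) * b ^ (n - 1) ≤ a ^ n - b ^ n := by
  have := nmul_le h0 hba hn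
  linarith [this]

theorem pair_pcoef_nonneg {a b : ℝ} (h0 : 0 ≤ b) (hba : b ≤ a) :
    0 ≤ (n : ℝ) * (a - b) * b ^ (n - 1) := by
  exact mul_nonneg (mul_nonneg (Nat.cast_nonneg n) (by linarith)) (pow_nonneg h0 _)

/-- `b^n ≤ 1 - p` when `0 ≤ b ≤ a ≤ 1`. -/
theorem pair_pow_le_one_sub {a b : ℝ} (hn : 1 ≤ n) (h0 : 0 ≤ b) (hba : b ≤ a) (ha : a ≤ 1) :
    b ^ n ≤ 1 - (n : ℝ) * (a - b) * b ^ (n - 1) := by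
  have h1 := pair_pcoef_le (a := a) (b := b) hn h0 hba
  have h2 : a ^ n ≤ 1 := pow_le_one₀ (le_trans h0 hba) ha
  linarith

/-- For `n ≥ 2`, uniform bound `p ≤ 3/4`. -/
theorem pair_pcoef_le_three_quarters {a b : ℝ} (hn2 : 2 ≤ n) (h0 : 0 ≤ b) (hba : b ≤ a)
    (ha : a ≤ 1) : (n : ℝ) * (a - b) * b ^ (n - 1) ≤ 3 / 4 := by
  set t : ℝ := 1 - b with ht
  have htnn : 0 ≤ t := by have := hba.trans ha; simp [ht]; linarith
  have hb1 : b ≤ 1 := hba.trans ha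
  -- b ^ (n-1) ≤ exp (-(n-1) t)
  have hbe : b ≤ Real.exp (-t) := by
    have := Real.add_one_le_exp (-t)
    simpa [ht] using this
  have hpow : b ^ (n-1) ≤ Real.exp (-t) ^ (n-1) := pow_le_pow_left₀ h0 hbe _
  have hexp : Real.exp (-t) ^ (n-1) = Real.exp (-((n:ℝ)-1) * t) := by
    rw [← Real.exp_nat_mul]
    congr 1
    have : ((n - 1 : ℕ) : ℝ) = (n:ℝ) - 1 := by
      have : 1 ≤ n := le_trans (by norm_num) hn2
      push_cast [Nat.cast_sub this]
      ring
    rw [this]; ring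
  -- key: u * exp (-u) ≤ exp (-1)
  have key : ∀ u : ℝ, 0 ≤ u → u * Real.exp (-u) ≤ Real.exp (-1) := by
    intro u hu
    have h1 : u ≤ Real.exp (u - 1) := by
      have := Real.add_one_le_exp (u - 1); linarith
    have h2 : Real.exp (u - 1) * Real.exp (-u) = Real.exp (-1) := by
      rw [← Real.exp_add]; ring_nf
    calc u * Real.exp (-u) ≤ Real.exp (u-1) * Real.exp (-u) :=
          mul_le_mul_of_nonneg_right h1 (Real.exp_nonneg _)
      _ = Real.exp (-1) := h2
  have hn1 : (1:ℝ) ≤ (n:ℝ) - 1 := by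
    have : (2:ℝ) ≤ (n:ℝ) := by exact_mod_cast hn2
    linarith
  have hu := key (((n:ℝ)-1) * t) (by positivity)
  -- n (a-b) b^(n-1) ≤ n t b^(n-1) ≤ n t exp(-(n-1)t) ≤ (n/(n-1)) exp(-1) ≤ 2 exp(-1) ≤ 3/4
  have hnn : (0:ℝ) < (n:ℝ) := by positivity
  have step1 : (n : ℝ) * (a - b) * b ^ (n - 1) ≤ (n:ℝ) * t * Real.exp (-((n:ℝ)-1) * t) := by
    have hab : a - b ≤ t := by simp [ht]; linarith
    have hbp : (0:ℝ) ≤ b ^ (n-1) := pow_nonneg h0 _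
    have hE : b ^ (n-1) ≤ Real.exp (-((n:ℝ)-1) * t) := by rw [← hexp]; exact hpow
    have habnn : 0 ≤ a - b := by linarith
    calc (n : ℝ) * (a - b) * b ^ (n - 1) ≤ (n:ℝ) * t * b ^ (n-1) := by
          apply mul_le_mul_of_nonneg_right _ hbp
          apply mul_le_mul_of_nonneg_left hab hnn.le
      _ ≤ (n:ℝ) * t * Real.exp (-((n:ℝ)-1) * t) := by
          apply mul_le_mul_of_nonneg_left hE (by positivity)
  have step2 : (n:ℝ) * t * Real.exp (-((n:ℝ)-1) * t) ≤ 2 * Real.exp (-1) := by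
    have hne : ((n:ℝ) - 1) ≠ 0 := by linarith
    have hrw : (n:ℝ) * t * Real.exp (-((n:ℝ)-1) * t)
        = ((n:ℝ)/((n:ℝ)-1)) * ((((n:ℝ)-1) * t) * Real.exp (-(((n:ℝ)-1) * t))) := by
      field_simp
    rw [hrw]
    have hfrac : (n:ℝ)/((n:ℝ)-1) ≤ 2 := by
      rw [div_le_iff₀ (by linarith)]
      linarith
    have hprod : (((n:ℝ)-1) * t) * Real.exp (-(((n:ℝ)-1) * t)) ≤ Real.exp (-1) :=
      hu
    have hprodnn : 0 ≤ (((n:ℝ)-1) * t) * Real.exp (-(((n:ℝ)-1) * t)) := by positivity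
    exact mul_le_mul hfrac hprod hprodnn (by norm_num)
  have step3 : 2 * Real.exp (-1) ≤ 3/4 := by
    have h9 : (2.7182818283 : ℝ) < Real.exp 1 := Real.exp_one_gt_d9
    have : Real.exp (-1) = 1 / Real.exp 1 := by
      rw [Real.exp_neg]; rw [inv_eq_one_div]
    rw [this]
    rw [mul_one_div, div_le_iff₀ (by positivity : (0:ℝ) < Real.exp 1)]
    nlinarith
  calc (n : ℝ) * (a - b) * b ^ (n - 1) ≤ (n:ℝ) * t * Real.exp (-((n:ℝ)-1) * t) := step1
    _ ≤ 2 * Real.exp (-1) := step2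
    _ ≤ 3/4 := step3

/-- one-quarter lower bound on denominator for `n ≥ 2`. -/
theorem pair_quarter_le {a b : ℝ} (hn2 : 2 ≤ n) (h0 : 0 ≤ b) (hba : b ≤ a) (ha : a ≤ 1) :
    (1:ℝ)/4 ≤ 1 - (n : ℝ) * (a - b) * b ^ (n - 1) := by
  have := pair_pcoef_le_three_quarters (a := a) (b := b) hn2 h0 hba ha
  linarith

end Pair

section SingleVar

variable {n : ℕ}

/-- key quotient bound: `b^n/(1-p) ≤ a` for `0 < b ≤ a ≤ 1`. -/
theorem pair_div_le_left {a b : ℝ} (hn : 1 ≤ n) (hb : 0 < b) (hba : b ≤ a) (ha : a ≤ 1) :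
    b ^ n / (1 - (n : ℝ) * (a - b) * b ^ (n - 1)) ≤ a := by
  have hD : (0:ℝ) < 1 - (n : ℝ) * (a - b) * b ^ (n - 1) :=
    lt_of_lt_of_le (pow_pos hb n) (pair_pow_le_one_sub hn hb.le hba ha)
  rw [div_le_iff₀ hD]
  have hp := pair_pcoef_le (a := a) (b := b) hn hb.le hba
  have ha0 : 0 ≤ a := hb.le.trans hba
  have hban : b ^ n ≤ a ^ n := pow_le_pow_left₀ hb.le hba n
  have hana : a ^ n ≤ a := pow_le_of_le_one ha0 ha (by omega)
  have h1 : a * ((n : ℝ) * (a - b) * b ^ (n - 1)) ≤ a * (a ^ n - b ^ n) :=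
    mul_le_mul_of_nonneg_left hp ha0
  have han1 : a ^ n ≤ 1 := pow_le_one₀ ha0 ha
  nlinarith

/-- `A`-monotonicity: `s ↦ s^n / (1 - n (a - s) s^(n-1))` is monotone. -/
theorem dA_mono {a s s' : ℝ} (hn : 1 ≤ n) (hs : 0 < s) (hss : s ≤ s') (hsa : s' ≤ a)
    (ha : a ≤ 1) :
    s ^ n / (1 - (n : ℝ) * (a - s) * s ^ (n - 1)) ≤
      s' ^ n / (1 - (n : ℝ) * (a - s') * s' ^ (n - 1)) := by
  obtain ⟨m, rfl⟩ : ∃ m, n = m + 1 := ⟨n - 1, by omega⟩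
  simp only [Nat.add_sub_cancel] at *
  push_cast
  have hs' : 0 < s' := lt_of_lt_of_le hs hss
  have hsa' : s ≤ a := hss.trans hsa
  have hsnD := pair_pow_le_one_sub (n := m+1) (a := a) (b := s) (by omega) hs.le hsa' ha
  have hsnD' := pair_pow_le_one_sub (n := m+1) (a := a) (b := s') (by omega) hs'.le hsa ha
  simp only [Nat.add_sub_cancel] at hsnD hsnD'
  push_cast at hsnD hsnD'
  have hD : (0:ℝ) < 1 - ((m:ℝ)+1) * (a - s) * s ^ m :=
    lt_of_lt_of_le (pow_pos hs (m+1)) hsnD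
  have hD' : (0:ℝ) < 1 - ((m:ℝ)+1) * (a - s') * s' ^ m :=
    lt_of_lt_of_le (pow_pos hs' (m+1)) hsnD'
  rw [div_le_div_iff₀ hD hD']
  have hsm0 : (0:ℝ) ≤ s ^ m := pow_nonneg hs.le m
  have hss0 : (0:ℝ) ≤ s' - s := by linarith
  have key : ((m:ℝ)+1) * a * s ^ m * s' ^ m * (s' - s) ≤ s' ^ (m+1) - s ^ (m+1) := by
    have h1 := nmul_le (n := m+1) (a := s') (b := s) hs.le hss (by omega)
    simp only [Nat.add_sub_cancel] at h1
    push_cast at h1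
    have h2 : a * s' ^ m ≤ 1 := by
      have hsm : s' ^ m ≤ 1 := pow_le_one₀ hs'.le (hsa.trans ha)
      have ha0 : 0 ≤ a := hs'.le.trans hsa
      nlinarith
    have h3 : (0:ℝ) ≤ ((m:ℝ)+1) * s ^ m * (s' - s) :=
      mul_nonneg (mul_nonneg (by positivity) hsm0) hss0
    calc ((m:ℝ)+1) * a * s ^ m * s' ^ m * (s' - s)
        = (((m:ℝ)+1) * s ^ m * (s' - s)) * (a * s' ^ m) := by ring
      _ ≤ (((m:ℝ)+1) * s ^ m * (s' - s)) * 1 := mul_le_mul_of_nonneg_left h2 h3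
      _ ≤ s' ^ (m+1) - s ^ (m+1) := by rw [mul_one]; linarith
  have e : s' ^ (m+1) * (1 - ((m:ℝ)+1) * (a - s) * s ^ m)
      - s ^ (m+1) * (1 - ((m:ℝ)+1) * (a - s') * s' ^ m)
      = (s' ^ (m+1) - s ^ (m+1)) - ((m:ℝ)+1) * a * s ^ m * s' ^ m * (s' - s) := by ring
  linarith [key, e]

/-- `A`-Lipschitz, compensated: `(A(s') - A(s)) * B ≤ 16 n (s' - s)` for `0 ≤ B ≤ min 1 s'`. -/
theorem dA_lip {a s s' B : ℝ} (hn : 1 ≤ n) (hs : 0 < s) (hss : s ≤ s') (hsa : s' ≤ a)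
    (ha : a ≤ 1) (hB0 : 0 ≤ B) (hB1 : B ≤ 1) (hBs : B ≤ s') :
    (s' ^ n / (1 - (n : ℝ) * (a - s') * s' ^ (n - 1))
      - s ^ n / (1 - (n : ℝ) * (a - s) * s ^ (n - 1))) * B ≤ 16 * n * (s' - s) := by
  obtain ⟨m, rfl⟩ : ∃ m, n = m + 1 := ⟨n - 1, by omega⟩
  simp only [Nat.add_sub_cancel] at *
  push_cast
  have hs' : 0 < s' := lt_of_lt_of_le hs hss
  have hsa' : s ≤ a := hss.trans hsa
  have hsnD := pair_pow_le_one_sub (n := m+1) (a := a) (b := s) (by omega) hs.le hsa' ha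
  have hsnD' := pair_pow_le_one_sub (n := m+1) (a := a) (b := s') (by omega) hs'.le hsa ha
  simp only [Nat.add_sub_cancel] at hsnD hsnD'
  push_cast at hsnD hsnD'
  have hD : (0:ℝ) < 1 - ((m:ℝ)+1) * (a - s) * s ^ m :=
    lt_of_lt_of_le (pow_pos hs (m+1)) hsnD
  have hD' : (0:ℝ) < 1 - ((m:ℝ)+1) * (a - s') * s' ^ m :=
    lt_of_lt_of_le (pow_pos hs' (m+1)) hsnD'
  rw [div_sub_div _ _ hD'.ne' hD.ne']
  have hNumEq : s' ^ (m+1) * (1 - ((m:ℝ)+1) * (a - s) * s ^ m)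
      - (1 - ((m:ℝ)+1) * (a - s') * s' ^ m) * s ^ (m+1)
      = (s' ^ (m+1) - s ^ (m+1)) - ((m:ℝ)+1) * a * s ^ m * s' ^ m * (s' - s) := by
    ring
  rw [hNumEq]
  have hDD : (0:ℝ) < (1 - ((m:ℝ)+1) * (a - s') * s' ^ m)
      * (1 - ((m:ℝ)+1) * (a - s) * s ^ m) := mul_pos hD' hD
  rw [div_mul_eq_mul_div, div_le_iff₀ hDD]
  have hsm0 : (0:ℝ) ≤ s ^ m := pow_nonneg hs.le m
  have hsm0' : (0:ℝ) ≤ s' ^ m := pow_nonneg hs'.le m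
  have ha0 : (0:ℝ) ≤ a := hs'.le.trans hsa
  have hsm : s' ^ m ≤ 1 := pow_le_one₀ hs'.le (hsa.trans ha)
  have hss0 : (0:ℝ) ≤ s' - s := by linarith
  have h1 : ((m:ℝ)+1) * s ^ m * (s' - s) ≤ s' ^ (m+1) - s ^ (m+1) := by
    have := nmul_le (n := m+1) (a := s') (b := s) hs.le hss (by omega)
    simp only [Nat.add_sub_cancel] at this
    push_cast at this; linarith
  have hNum_nonneg : (0:ℝ) ≤ (s' ^ (m+1) - s ^ (m+1))
      - ((m:ℝ)+1) * a * s ^ m * s' ^ m * (s' - s) := by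
    have h2 : ((m:ℝ)+1) * a * s ^ m * s' ^ m * (s' - s)
        ≤ ((m:ℝ)+1) * s ^ m * (s' - s) := by
      have ha1 : a * s' ^ m ≤ 1 := by nlinarith
      have h3 : (0:ℝ) ≤ ((m:ℝ)+1) * s ^ m * (s' - s) :=
        mul_nonneg (mul_nonneg (by positivity) hsm0) hss0
      calc ((m:ℝ)+1) * a * s ^ m * s' ^ m * (s' - s)
          = (((m:ℝ)+1) * s ^ m * (s' - s)) * (a * s' ^ m) := by ring
        _ ≤ (((m:ℝ)+1) * s ^ m * (s' - s)) * 1 := mul_le_mul_of_nonneg_left ha1 h3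
        _ = ((m:ℝ)+1) * s ^ m * (s' - s) := mul_one _
    linarith
  have hpow_le : s' ^ (m+1) - s ^ (m+1) ≤ ((m:ℝ)+1) * (s' - s) := by
    have h4 := nmul_ge (n := m+1) (a := s') (b := s) hs.le hss (by omega)
    simp only [Nat.add_sub_cancel] at h4
    push_cast at h4
    have h5 : ((m:ℝ)+1) * s' ^ m * (s' - s) ≤ ((m:ℝ)+1) * (s' - s) := by
      have h6 : (0:ℝ) ≤ ((m:ℝ)+1) * (s' - s) := mul_nonneg (by positivity) hss0
      calc ((m:ℝ)+1) * s' ^ m * (s' - s) = (((m:ℝ)+1) * (s' - s)) * s' ^ m := by ring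
        _ ≤ (((m:ℝ)+1) * (s' - s)) * 1 := mul_le_mul_of_nonneg_left hsm h6
        _ = ((m:ℝ)+1) * (s' - s) := mul_one _
    linarith
  rcases Nat.eq_zero_or_pos m with rfl | hm
  · -- n = 1 : compensated bound
    simp only [pow_zero, pow_one, Nat.cast_zero, mul_one] at *
    -- goal: (s' - s - (0+1)*a*(s'-s)) * B ≤ 16*(0+1)*(s'-s)*((1-(0+1)*(a-s'))*(1-(0+1)*(a-s)))
    have hkey : (1 - a) * B ≤ (1 - (a - s')) * (1 - (a - s)) := by
      have k1 : (1 - a) * B ≤ (1 - a) * s' := by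
        apply mul_le_mul_of_nonneg_left hBs (by linarith)
      have k2 : (1 - a) * s' ≤ (1 - (a - s')) * (1 - (a - s)) := by nlinarith
      linarith
    have := mul_le_mul_of_nonneg_left hkey hss0
    nlinarith
  · -- n ≥ 2 : quarter bound
    have hq : (1:ℝ)/4 ≤ 1 - ((m:ℝ)+1) * (a - s) * s ^ m := by
      have := pair_quarter_le (n := m+1) (a := a) (b := s) (by omega) hs.le hsa' ha
      simp only [Nat.add_sub_cancel] at this; push_cast at this; linarith
    have hq' : (1:ℝ)/4 ≤ 1 - ((m:ℝ)+1) * (a - s') * s' ^ m := by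
      have := pair_quarter_le (n := m+1) (a := a) (b := s') (by omega) hs'.le hsa ha
      simp only [Nat.add_sub_cancel] at this; push_cast at this; linarith
    have h16 : (1:ℝ) ≤ 16 * ((1 - ((m:ℝ)+1) * (a - s') * s' ^ m)
        * (1 - ((m:ℝ)+1) * (a - s) * s ^ m)) := by
      have := mul_le_mul hq' hq (by norm_num) (by linarith)
      linarith
    have hNB : ((s' ^ (m+1) - s ^ (m+1))
        - ((m:ℝ)+1) * a * s ^ m * s' ^ m * (s' - s)) * B ≤ ((m:ℝ)+1) * (s' - s) := by
      calc ((s' ^ (m+1) - s ^ (m+1)) - ((m:ℝ)+1) * a * s ^ m * s' ^ m * (s' - s)) * B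
          ≤ ((s' ^ (m+1) - s ^ (m+1)) - ((m:ℝ)+1) * a * s ^ m * s' ^ m * (s' - s)) * 1 :=
            mul_le_mul_of_nonneg_left hB1 hNum_nonneg
        _ ≤ ((m:ℝ)+1) * (s' - s) := by
            rw [mul_one]
            have hcross0 : (0:ℝ) ≤ ((m:ℝ)+1) * a * s ^ m * s' ^ m * (s' - s) :=
              mul_nonneg (mul_nonneg (mul_nonneg (mul_nonneg (by positivity) ha0) hsm0)
                hsm0') hss0
            linarith
    have hc : (0:ℝ) ≤ ((m:ℝ)+1) * (s' - s) := mul_nonneg (by positivity) hss0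
    have h17 := mul_le_mul_of_nonneg_left h16 hc
    rw [mul_one] at h17
    have e2 : ((m:ℝ)+1) * (s' - s) * (16 * ((1 - ((m:ℝ)+1) * (a - s') * s' ^ m)
        * (1 - ((m:ℝ)+1) * (a - s) * s ^ m)))
        = 16 * ((m:ℝ)+1) * (s' - s) * ((1 - ((m:ℝ)+1) * (a - s') * s' ^ m)
        * (1 - ((m:ℝ)+1) * (a - s) * s ^ m)) := by ring
    linarith [hNB, h17, e2]

end SingleVar

section SingleVarB

variable {n : ℕ}

/-- `B`-monotonicity in the upper variable. -/
theorem dB_mono {c s s' : ℝ} (hn : 1 ≤ n) (hc : 0 < c) (hcs : c ≤ s) (hss : s ≤ s')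
    (hs1 : s' ≤ 1) :
    c ^ n / (1 - (n : ℝ) * (s - c) * c ^ (n - 1)) ≤
      c ^ n / (1 - (n : ℝ) * (s' - c) * c ^ (n - 1)) := by
  have hD' : (0:ℝ) < 1 - (n : ℝ) * (s' - c) * c ^ (n - 1) :=
    lt_of_lt_of_le (pow_pos hc n) (pair_pow_le_one_sub hn hc.le (hcs.trans hss) hs1)
  have hmono : 1 - (n : ℝ) * (s' - c) * c ^ (n - 1) ≤ 1 - (n : ℝ) * (s - c) * c ^ (n - 1) := by
    have h1 : (n : ℝ) * (s - c) * c ^ (n - 1) ≤ (n : ℝ) * (s' - c) * c ^ (n - 1) := by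
      have hcp : (0:ℝ) ≤ c ^ (n-1) := pow_nonneg hc.le _
      have hnn : (0:ℝ) ≤ (n:ℝ) := Nat.cast_nonneg n
      have e : (n:ℝ) * (s' - c) * c ^ (n-1) - (n:ℝ) * (s - c) * c ^ (n-1)
          = (n:ℝ) * (s' - s) * c ^ (n-1) := by ring
      have pos : (0:ℝ) ≤ (n:ℝ) * (s' - s) * c ^ (n-1) :=
        mul_nonneg (mul_nonneg hnn (by linarith)) hcp
      linarith
    linarith
  exact div_le_div_of_nonneg_left (pow_nonneg hc.le n) hD' hmono

/-- `B`-Lipschitz, compensated by `Q ≤ c`. -/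
theorem dB_lip {c s s' Q : ℝ} (hn : 1 ≤ n) (hc : 0 < c) (hcs : c ≤ s) (hss : s ≤ s')
    (hs1 : s' ≤ 1) (hQ0 : 0 ≤ Q) (hQc : Q ≤ c) :
    (c ^ n / (1 - (n : ℝ) * (s' - c) * c ^ (n - 1))
      - c ^ n / (1 - (n : ℝ) * (s - c) * c ^ (n - 1))) * Q ≤ (n : ℝ) * (s' - s) := by
  have hcnD := pair_pow_le_one_sub (n := n) (a := s) (b := c) hn hc.le hcs (hss.trans hs1)
  have hcnD' := pair_pow_le_one_sub (n := n) (a := s') (b := c) hn hc.le (hcs.trans hss) hs1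
  have hD : (0:ℝ) < 1 - (n : ℝ) * (s - c) * c ^ (n - 1) :=
    lt_of_lt_of_le (pow_pos hc n) hcnD
  have hD' : (0:ℝ) < 1 - (n : ℝ) * (s' - c) * c ^ (n - 1) :=
    lt_of_lt_of_le (pow_pos hc n) hcnD'
  rw [div_sub_div _ _ hD'.ne' hD.ne']
  have hNumEq : c ^ n * (1 - (n : ℝ) * (s - c) * c ^ (n - 1))
      - (1 - (n : ℝ) * (s' - c) * c ^ (n - 1)) * c ^ n
      = (n:ℝ) * (s' - s) * (c ^ (n-1) * c ^ n) := by ring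
  rw [hNumEq, div_mul_eq_mul_div, div_le_iff₀ (mul_pos hD' hD)]
  -- suffices : n (s'-s) c^{n-1} c^n Q ≤ n (s'-s) D' D, since c^{n-1} c^n Q ≤ c^n c^n ≤ D' D
  have hkey : c ^ (n-1) * c ^ n * Q ≤ (1 - (n : ℝ) * (s' - c) * c ^ (n - 1))
      * (1 - (n : ℝ) * (s - c) * c ^ (n - 1)) := by
    have h1 : c ^ (n-1) * c ^ n * Q ≤ c ^ n * c ^ n := by
      have e : c ^ (n-1) * Q ≤ c ^ (n-1) * c :=
        mul_le_mul_of_nonneg_left hQc (pow_nonneg hc.le _)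
      have e2 : c ^ (n-1) * c = c ^ n := by
        conv_rhs => rw [show n = (n-1)+1 by omega]
        rw [pow_succ]
      calc c ^ (n-1) * c ^ n * Q = (c ^ (n-1) * Q) * c ^ n := by ring
        _ ≤ (c ^ (n-1) * c) * c ^ n :=
            mul_le_mul_of_nonneg_right e (pow_nonneg hc.le n)
        _ = c ^ n * c ^ n := by rw [e2]
    have h2 : c ^ n * c ^ n ≤ (1 - (n : ℝ) * (s' - c) * c ^ (n - 1))
        * (1 - (n : ℝ) * (s - c) * c ^ (n - 1)) :=
      mul_le_mul hcnD' hcnD (pow_nonneg hc.le n) (by linarith)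
    linarith
  have hss0 : (0:ℝ) ≤ (n:ℝ) * (s' - s) := by
    have : (0:ℝ) ≤ s' - s := by linarith
    positivity
  calc (n:ℝ) * (s' - s) * (c ^ (n-1) * c ^ n) * Q
      = ((n:ℝ) * (s' - s)) * (c ^ (n-1) * c ^ n * Q) := by ring
    _ ≤ ((n:ℝ) * (s' - s)) * ((1 - (n : ℝ) * (s' - c) * c ^ (n - 1))
        * (1 - (n : ℝ) * (s - c) * c ^ (n - 1))) := by
        apply mul_le_mul_of_nonneg_left hkey hss0
    _ = (n:ℝ) * (s' - s) * ((1 - (n : ℝ) * (s' - c) * c ^ (n - 1))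
        * (1 - (n : ℝ) * (s - c) * c ^ (n - 1))) := by ring

/-- Monotonicity of the bracket `s ↦ s^n - b^n b^n / (1 - n (s - b) b^(n-1))`. -/
theorem dBr_mono {b s s' : ℝ} (hn : 1 ≤ n) (hb : 0 < b) (hbs : b ≤ s) (hss : s ≤ s')
    (hs1 : s' ≤ 1) :
    s ^ n - b ^ n * b ^ n / (1 - (n : ℝ) * (s - b) * b ^ (n - 1)) ≤
      s' ^ n - b ^ n * b ^ n / (1 - (n : ℝ) * (s' - b) * b ^ (n - 1)) := by
  have hbnD := pair_pow_le_one_sub (n := n) (a := s) (b := b) hn hb.le hbs (hss.trans hs1)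
  have hbnD' := pair_pow_le_one_sub (n := n) (a := s') (b := b) hn hb.le (hbs.trans hss) hs1
  have hD : (0:ℝ) < 1 - (n : ℝ) * (s - b) * b ^ (n - 1) :=
    lt_of_lt_of_le (pow_pos hb n) hbnD
  have hD' : (0:ℝ) < 1 - (n : ℝ) * (s' - b) * b ^ (n - 1) :=
    lt_of_lt_of_le (pow_pos hb n) hbnD'
  rw [sub_le_sub_iff]
  have e : b ^ n * b ^ n / (1 - (n : ℝ) * (s' - b) * b ^ (n - 1))
      - b ^ n * b ^ n / (1 - (n : ℝ) * (s - b) * b ^ (n - 1))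
      = (b ^ n * b ^ n * ((n:ℝ) * (s' - s) * b ^ (n-1)))
        / ((1 - (n : ℝ) * (s' - b) * b ^ (n - 1)) * (1 - (n : ℝ) * (s - b) * b ^ (n - 1))) := by
    rw [div_sub_div _ _ hD'.ne' hD.ne']
    congr 1
    ring
  have hbound : (b ^ n * b ^ n * ((n:ℝ) * (s' - s) * b ^ (n-1)))
        / ((1 - (n : ℝ) * (s' - b) * b ^ (n - 1)) * (1 - (n : ℝ) * (s - b) * b ^ (n - 1)))
      ≤ s' ^ n - s ^ n := by
    rw [div_le_iff₀ (mul_pos hD' hD)]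
    have hY : (n:ℝ) * (s' - s) * b ^ (n-1) ≤ s' ^ n - s ^ n := by
      have h1 := nmul_le (n := n) (a := s') (b := s) (hb.le.trans hbs) hss hn
      have h2 : b ^ (n-1) ≤ s ^ (n-1) := pow_le_pow_left₀ hb.le hbs _
      have h3 : (n:ℝ) * (s' - s) * b ^ (n-1) ≤ (n:ℝ) * (s' - s) * s ^ (n-1) := by
        apply mul_le_mul_of_nonneg_left h2
        have : (0:ℝ) ≤ s' - s := by linarith
        positivity
      have e3 : (n:ℝ) * (s' - s) * s ^ (n-1) = (n:ℝ) * s ^ (n-1) * (s' - s) := by ring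
      linarith
    have hY0 : 0 ≤ (n:ℝ) * (s' - s) * b ^ (n-1) := by
      have : (0:ℝ) ≤ s' - s := by linarith
      positivity
    have hX : b ^ n * b ^ n ≤ (1 - (n : ℝ) * (s' - b) * b ^ (n - 1))
        * (1 - (n : ℝ) * (s - b) * b ^ (n - 1)) :=
      mul_le_mul hbnD' hbnD (pow_nonneg hb.le n) (by linarith)
    calc b ^ n * b ^ n * ((n:ℝ) * (s' - s) * b ^ (n-1))
        ≤ ((1 - (n : ℝ) * (s' - b) * b ^ (n - 1)) * (1 - (n : ℝ) * (s - b) * b ^ (n - 1)))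
          * ((n:ℝ) * (s' - s) * b ^ (n-1)) :=
          mul_le_mul_of_nonneg_right hX hY0
      _ ≤ ((1 - (n : ℝ) * (s' - b) * b ^ (n - 1)) * (1 - (n : ℝ) * (s - b) * b ^ (n - 1)))
          * (s' ^ n - s ^ n) := by
          apply mul_le_mul_of_nonneg_left hY (mul_pos hD' hD).le
      _ = (s' ^ n - s ^ n) * ((1 - (n : ℝ) * (s' - b) * b ^ (n - 1))
          * (1 - (n : ℝ) * (s - b) * b ^ (n - 1))) := by ring
  linarith [e, hbound]

/-- Nonnegativity of the bracket. -/
theorem dBr_nonneg {b s : ℝ} (hn : 1 ≤ n) (hb : 0 < b) (hbs : b ≤ s) (hs1 : s ≤ 1) :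
    0 ≤ s ^ n - b ^ n * b ^ n / (1 - (n : ℝ) * (s - b) * b ^ (n - 1)) := by
  have hbnD := pair_pow_le_one_sub (n := n) (a := s) (b := b) hn hb.le hbs hs1
  have hD : (0:ℝ) < 1 - (n : ℝ) * (s - b) * b ^ (n - 1) :=
    lt_of_lt_of_le (pow_pos hb n) hbnD
  rw [sub_nonneg, div_le_iff₀ hD]
  have hbn : b ^ n ≤ s ^ n := pow_le_pow_left₀ hb.le hbs n
  exact mul_le_mul hbn hbnD (pow_nonneg hb.le n) (pow_nonneg (hb.le.trans hbs) n)

end SingleVarB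

section SeqLemmas

variable {n : ℕ} {x : ℕ → ℝ}

theorem pcoef_def (j : ℕ) : pcoef n x j = (n : ℝ) * (x j - x (j+1)) * x (j+1) ^ (n-1) := rfl

theorem denom_pos (hx : gseq x) (hn : 1 ≤ n) {j : ℕ} (hb : 0 < x (j+1)) :
    0 < 1 - pcoef n x j := by
  rw [pcoef_def]
  exact lt_of_lt_of_le (pow_pos hb n)
    (pair_pow_le_one_sub hn hb.le (hx.2.1 j) (hx.le_one j))

theorem muFactor_eq (hn : 1 ≤ n) {j : ℕ} (hb : 0 < x (j+1)) :
    muFactor n x j = x (j+1) ^ n / (1 - pcoef n x j) := by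
  rw [muFactor, if_neg]
  rintro ⟨h1, -⟩
  exact absurd h1 (pow_pos hb n).ne'

theorem muFactor_nonneg (hx : gseq x) (hn : 1 ≤ n) (j : ℕ) : 0 ≤ muFactor n x j := by
  rcases eq_or_lt_of_le (hx.nonneg (j+1)) with hb | hb
  · rw [muFactor]
    split
    · norm_num
    · rw [← hb, zero_pow (by omega), zero_div]
  · rw [muFactor_eq hn hb]
    exact div_nonneg (pow_nonneg (hx.nonneg _) n) (denom_pos hx hn hb).le

theorem muFactor_le_one (hx : gseq x) (hn : 1 ≤ n) (j : ℕ) : muFactor n x j ≤ 1 := by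
  rcases eq_or_lt_of_le (hx.nonneg (j+1)) with hb | hb
  · rw [muFactor]
    split
    · exact le_rfl
    · rw [← hb, zero_pow (by omega), zero_div]; norm_num
  · rw [muFactor_eq hn hb, div_le_one (denom_pos hx hn hb)]
    rw [pcoef_def]
    exact pair_pow_le_one_sub hn hb.le (hx.2.1 j) (hx.le_one j)

theorem muFactor_le_left (hx : gseq x) (hn : 1 ≤ n) (j : ℕ) : muFactor n x j ≤ x j := by
  rcases eq_or_lt_of_le (hx.nonneg (j+1)) with hb | hb
  · rw [muFactor]
    split
    · rename_i h
      -- 1 - pcoef = 0 with x (j+1) = 0 forces n = 1 and x j = 1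
      have hp : pcoef n x j = 1 := by linarith [h.2]
      rcases eq_or_lt_of_le hn with h1 | h2
      · -- n = 1
        have hn1 : n = 1 := h1.symm
        rw [pcoef_def, hn1, ← hb] at hp
        norm_num at hp
        linarith
      · -- n ≥ 2 : pcoef = 0, contradiction
        exfalso
        rw [pcoef_def, ← hb] at hp
        rw [zero_pow (by omega : n - 1 ≠ 0)] at hp
        simp at hp
    · rw [← hb, zero_pow (by omega), zero_div]
      exact hx.nonneg j
  · rw [muFactor_eq hn hb, pcoef_def]
    exact pair_div_le_left hn hb (hx.2.1 j) (hx.le_one j)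

theorem mu_succ (k : ℕ) : mu n x (k+1) = mu n x k * muFactor n x k :=
  Finset.prod_range_succ _ _

theorem mu_nonneg (hx : gseq x) (hn : 1 ≤ n) (k : ℕ) : 0 ≤ mu n x k :=
  Finset.prod_nonneg fun j _ => muFactor_nonneg hx hn j

theorem mu_le_one (hx : gseq x) (hn : 1 ≤ n) (k : ℕ) : mu n x k ≤ 1 :=
  Finset.prod_le_one (fun j _ => muFactor_nonneg hx hn j) (fun j _ => muFactor_le_one hx hn j)

theorem muFactor_congr {y : ℕ → ℝ} {j : ℕ} (h1 : x j = y j) (h2 : x (j+1) = y (j+1)) :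
    muFactor n x j = muFactor n y j := by
  rw [muFactor, muFactor, pcoef_def, pcoef_def, h1, h2]

theorem mu_congr {y : ℕ → ℝ} {k : ℕ} (h : ∀ j ≤ k, x j = y j) : mu n x k = mu n y k := by
  apply Finset.prod_congr rfl
  intro j hj
  rw [Finset.mem_range] at hj
  exact muFactor_congr (h j (by omega)) (h (j+1) (by omega))

end SeqLemmas

/-- `fv n x m = x_m^n μ(x,m)`. -/
noncomputable def fv (n : ℕ) (x : ℕ → ℝ) (m : ℕ) : ℝ := x m ^ n * mu n x m

section FvLemmas

variable {n : ℕ} {x : ℕ → ℝ}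

theorem fv_nonneg (hx : gseq x) (hn : 1 ≤ n) (m : ℕ) : 0 ≤ fv n x m :=
  mul_nonneg (pow_nonneg (hx.nonneg m) n) (mu_nonneg hx hn m)

theorem fv_le_pow (hx : gseq x) (hn : 1 ≤ n) (m : ℕ) : fv n x m ≤ x m ^ n := by
  rw [fv]
  calc x m ^ n * mu n x m ≤ x m ^ n * 1 :=
        mul_le_mul_of_nonneg_left (mu_le_one hx hn m) (pow_nonneg (hx.nonneg m) n)
    _ = x m ^ n := mul_one _

theorem fv_le_self (hx : gseq x) (hn : 1 ≤ n) (m : ℕ) : fv n x m ≤ x m :=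
  (fv_le_pow hx hn m).trans (pow_le_of_le_one (hx.nonneg m) (hx.le_one m) (by omega))

theorem fv_le_one (hx : gseq x) (hn : 1 ≤ n) (m : ℕ) : fv n x m ≤ 1 :=
  (fv_le_self hx hn m).trans (hx.le_one m)

theorem fv_zero (hx : gseq x) : fv n x 0 = 1 := by
  rw [fv, mu, Finset.range_zero, Finset.prod_empty, hx.1, one_pow, mul_one]

theorem fv_congr {y : ℕ → ℝ} {m : ℕ} (h : ∀ j ≤ m, x j = y j) : fv n x m = fv n y m := by
  rw [fv, fv, h m le_rfl, mu_congr h]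

end FvLemmas

section Single

variable {n : ℕ}

/-- Single-coordinate monotonicity and Lipschitz bound for `fv`. -/
theorem fv_single (hn : 1 ≤ n) {x x' : ℕ → ℝ} (hx : gseq x) (hx' : gseq x')
    {i m : ℕ} (hi1 : 1 ≤ i) (him : i ≤ m)
    (hdiff : ∀ j, j ≠ i → x j = x' j) (hle : x i ≤ x' i) :
    0 ≤ fv n x' m - fv n x m ∧ fv n x' m - fv n x m ≤ 18 * n * (x' i - x i) := by
  have hΔ0 : (0:ℝ) ≤ x' i - x i := by linarith
  have h18 : (0:ℝ) ≤ 18 * n * (x' i - x i) := by positivity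
  have hxle' : ∀ j, x j ≤ x' j := by
    intro j
    by_cases h : j = i
    · subst h; exact hle
    · exact (hdiff j h).le
  by_cases hm0 : x' m ≤ 0
  · -- x' m = 0, both fv vanish
    have hxm' : x' m = 0 := le_antisymm hm0 (hx'.nonneg m)
    have hxm : x m = 0 := le_antisymm (hxm' ▸ hxle' m) (hx.nonneg m)
    have e1 : fv n x m = 0 := by rw [fv, hxm, zero_pow (by omega), zero_mul]
    have e2 : fv n x' m = 0 := by rw [fv, hxm', zero_pow (by omega), zero_mul]
    rw [e1, e2]
    constructor
    · norm_num
    · simpa using h18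
  push_neg at hm0
  by_cases hxm : x m ≤ 0
  · -- then i = m and x m = 0 : use fv ≤ x'_m
    have hxm0 : x m = 0 := le_antisymm hxm (hx.nonneg m)
    have hieq : i = m := by
      by_contra h
      have := hdiff m (by omega : m ≠ i)
      rw [hxm0] at this
      exact absurd this.symm (by linarith)
    subst hieq
    have e1 : fv n x i = 0 := by rw [fv, hxm0, zero_pow (by omega), zero_mul]
    rw [e1, sub_zero]
    refine ⟨fv_nonneg hx' hn i, ?_⟩
    have h1 : fv n x' i ≤ x' i := fv_le_self hx' hn i
    have h2 : x' i ≤ 18 * n * (x' i - x i) := by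
      rw [hxm0, sub_zero]
      have hcast : (1:ℝ) ≤ (n:ℝ) := by exact_mod_cast hn
      calc x' i = 1 * x' i := (one_mul _).symm
        _ ≤ (18 * n) * x' i := mul_le_mul_of_nonneg_right (by linarith) hm0.le
        _ = 18 * n * x' i := rfl
    linarith
  push_neg at hxm
  -- main case : all coordinates up to m positive
  have hpos : ∀ j, j ≤ m → 0 < x j := fun j hj => lt_of_lt_of_le hxm (hx.anti hj)
  have hpos' : ∀ j, j ≤ m → 0 < x' j := fun j hj => lt_of_lt_of_le (hpos j hj) (hxle' j)
  obtain ⟨l, rfl⟩ : ∃ l, i = l + 1 := ⟨i - 1, by omega⟩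
  have hxl : x' l = x l := (hdiff l (by omega)).symm
  have hPcongr : mu n x' l = mu n x l :=
    mu_congr fun j hj => (hdiff j (by omega)).symm
  set a : ℝ := x l with ha_def
  set s : ℝ := x (l+1) with hs_def
  set s' : ℝ := x' (l+1) with hs'_def
  have hs_pos : 0 < s := hpos (l+1) him
  have hss' : s ≤ s' := hle
  have hs'a : s' ≤ a := by
    rw [hs'_def, ha_def, hdiff l (by omega : l ≠ l + 1)]
    exact hx'.2.1 l
  have ha1 : a ≤ 1 := hx.le_one l
  have hP0 : 0 ≤ mu n x l := mu_nonneg hx hn l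
  have hP1 : mu n x l ≤ 1 := mu_le_one hx hn l
  -- formulas for the factor at l
  have hA : muFactor n x l = s ^ n / (1 - (n:ℝ) * (a - s) * s ^ (n-1)) := by
    rw [muFactor_eq hn hs_pos, pcoef_def]
  have hA' : muFactor n x' l = s' ^ n / (1 - (n:ℝ) * (a - s') * s' ^ (n-1)) := by
    rw [muFactor_eq hn (hpos' (l+1) him), pcoef_def, hxl]
  have hAmono : s ^ n / (1 - (n:ℝ) * (a - s) * s ^ (n-1))
      ≤ s' ^ n / (1 - (n:ℝ) * (a - s') * s' ^ (n-1)) :=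
    dA_mono hn hs_pos hss' hs'a ha1
  have hA0 : 0 ≤ s ^ n / (1 - (n:ℝ) * (a - s) * s ^ (n-1)) := by
    rw [← hA]; exact muFactor_nonneg hx hn l
  have hA1 : s ^ n / (1 - (n:ℝ) * (a - s) * s ^ (n-1)) ≤ 1 := by
    rw [← hA]; exact muFactor_le_one hx hn l
  have hA0' : 0 ≤ s' ^ n / (1 - (n:ℝ) * (a - s') * s' ^ (n-1)) := by
    rw [← hA']; exact muFactor_nonneg hx' hn l
  rcases eq_or_lt_of_le him with hieq | hlt
  · -- case i = m
    have hmeq : m = l + 1 := hieq.symm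
    subst hmeq
    have e1 : fv n x (l+1) = mu n x l * (s ^ n * (s ^ n / (1 - (n:ℝ) * (a - s) * s ^ (n-1)))) := by
      rw [fv, mu_succ, hA]; ring
    have e2 : fv n x' (l+1)
        = mu n x l * (s' ^ n * (s' ^ n / (1 - (n:ℝ) * (a - s') * s' ^ (n-1)))) := by
      rw [fv, mu_succ, hA', hPcongr]; ring
    have hpow_mono : s ^ n ≤ s' ^ n := pow_le_pow_left₀ hs_pos.le hss' n
    have hTmono : 0 ≤ s' ^ n * (s' ^ n / (1 - (n:ℝ) * (a - s') * s' ^ (n-1)))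
        - s ^ n * (s ^ n / (1 - (n:ℝ) * (a - s) * s ^ (n-1))) := by
      have t1 : s ^ n * (s ^ n / (1 - (n:ℝ) * (a - s) * s ^ (n-1)))
          ≤ s ^ n * (s' ^ n / (1 - (n:ℝ) * (a - s') * s' ^ (n-1))) :=
        mul_le_mul_of_nonneg_left hAmono (pow_nonneg hs_pos.le n)
      have t2 : s ^ n * (s' ^ n / (1 - (n:ℝ) * (a - s') * s' ^ (n-1)))
          ≤ s' ^ n * (s' ^ n / (1 - (n:ℝ) * (a - s') * s' ^ (n-1))) :=
        mul_le_mul_of_nonneg_right hpow_mono hA0'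
      linarith
    have hTlip : s' ^ n * (s' ^ n / (1 - (n:ℝ) * (a - s') * s' ^ (n-1)))
        - s ^ n * (s ^ n / (1 - (n:ℝ) * (a - s) * s ^ (n-1))) ≤ 17 * n * (s' - s) := by
      have hs'1 : s' ≤ 1 := hs'a.trans ha1
      have hb1 : s' ^ n ≤ 1 := pow_le_one₀ (hs_pos.le.trans hss') hs'1
      have hbs : s' ^ n ≤ s' := pow_le_of_le_one (hs_pos.le.trans hss') hs'1 (by omega)
      have t1 := dA_lip (n := n) hn hs_pos hss' hs'a ha1 (pow_nonneg (hs_pos.le.trans hss') n)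
        hb1 hbs
      have t2 : s ^ n * (s' ^ n - s ^ n) ≤ (n:ℝ) * (s' - s) := by
        have h4 := nmul_ge (n := n) (a := s') (b := s) hs_pos.le hss' hn
        have h5 : (n:ℝ) * s' ^ (n-1) * (s' - s) ≤ (n:ℝ) * (s' - s) := by
          have h6 : s' ^ (n-1) ≤ 1 := pow_le_one₀ (hs_pos.le.trans hss') hs'1
          have h7 : (0:ℝ) ≤ (n:ℝ) * (s' - s) := by positivity
          calc (n:ℝ) * s' ^ (n-1) * (s' - s) = ((n:ℝ) * (s' - s)) * s' ^ (n-1) := by ring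
            _ ≤ ((n:ℝ) * (s' - s)) * 1 := mul_le_mul_of_nonneg_left h6 h7
            _ = (n:ℝ) * (s' - s) := mul_one _
        have hsn1 : s ^ n ≤ 1 := pow_le_one₀ hs_pos.le (hss'.trans hs'1)
        have h8 : s' ^ n - s ^ n ≤ (n:ℝ) * (s' - s) := by linarith
        have h9 : 0 ≤ s' ^ n - s ^ n := by linarith [hpow_mono]
        have h10 : s ^ n * (s' ^ n - s ^ n) ≤ 1 * (s' ^ n - s ^ n) :=
          mul_le_mul_of_nonneg_right hsn1 h9
        linarith
      have expand : s' ^ n * (s' ^ n / (1 - (n:ℝ) * (a - s') * s' ^ (n-1)))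
          - s ^ n * (s ^ n / (1 - (n:ℝ) * (a - s) * s ^ (n-1)))
          = (s' ^ n / (1 - (n:ℝ) * (a - s') * s' ^ (n-1))
            - s ^ n / (1 - (n:ℝ) * (a - s) * s ^ (n-1))) * s' ^ n
            + s ^ n / (1 - (n:ℝ) * (a - s) * s ^ (n-1)) * (s' ^ n - s ^ n) := by ring
      have t3 : s ^ n / (1 - (n:ℝ) * (a - s) * s ^ (n-1)) * (s' ^ n - s ^ n)
          ≤ (n:ℝ) * (s' - s) := by
        have h9 : 0 ≤ s' ^ n - s ^ n := by linarith [hpow_mono]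
        calc s ^ n / (1 - (n:ℝ) * (a - s) * s ^ (n-1)) * (s' ^ n - s ^ n)
            ≤ 1 * (s' ^ n - s ^ n) := mul_le_mul_of_nonneg_right hA1 h9
          _ = s' ^ n - s ^ n := one_mul _
          _ ≤ (n:ℝ) * (s' - s) := by
              have h4 := nmul_ge (n := n) (a := s') (b := s) hs_pos.le hss' hn
              have h6 : s' ^ (n-1) ≤ 1 := pow_le_one₀ (hs_pos.le.trans hss') hs'1
              have h7 : (0:ℝ) ≤ (n:ℝ) * (s' - s) := by positivity
              have h5 : (n:ℝ) * s' ^ (n-1) * (s' - s) ≤ (n:ℝ) * (s' - s) := by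
                calc (n:ℝ) * s' ^ (n-1) * (s' - s) = ((n:ℝ) * (s' - s)) * s' ^ (n-1) := by ring
                  _ ≤ ((n:ℝ) * (s' - s)) * 1 := mul_le_mul_of_nonneg_left h6 h7
                  _ = (n:ℝ) * (s' - s) := mul_one _
              linarith
      linarith [expand, t1, t3]
    have hT : s ^ n * (s ^ n / (1 - (n:ℝ) * (a - s) * s ^ (n-1)))
        ≤ s' ^ n * (s' ^ n / (1 - (n:ℝ) * (a - s') * s' ^ (n-1))) := by linarith [hTmono]
    constructor
    · rw [e1, e2]
      have h := mul_le_mul_of_nonneg_left hT hP0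
      linarith
    · rw [e1, e2]
      have hd : mu n x l * (s' ^ n * (s' ^ n / (1 - (n:ℝ) * (a - s') * s' ^ (n-1))))
          - mu n x l * (s ^ n * (s ^ n / (1 - (n:ℝ) * (a - s) * s ^ (n-1))))
          = mu n x l * ((s' ^ n * (s' ^ n / (1 - (n:ℝ) * (a - s') * s' ^ (n-1))))
            - (s ^ n * (s ^ n / (1 - (n:ℝ) * (a - s) * s ^ (n-1))))) := by ring
      rw [hd]
      have h1 : mu n x l * ((s' ^ n * (s' ^ n / (1 - (n:ℝ) * (a - s') * s' ^ (n-1))))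
          - (s ^ n * (s ^ n / (1 - (n:ℝ) * (a - s) * s ^ (n-1)))))
          ≤ 1 * (17 * n * (s' - s)) := by
        apply mul_le_mul hP1 hTlip hTmono (by norm_num)
      have hcast : (0:ℝ) ≤ (n:ℝ) := Nat.cast_nonneg n
      have hm1 : (0:ℝ) ≤ (n:ℝ) * (s' - s) := mul_nonneg hcast hΔ0
      have : (17:ℝ) * n * (s' - s) ≤ 18 * n * (s' - s) := by linarith
      linarith
  · -- case i < m
    have him2 : l + 1 + 1 ≤ m := hlt
    set c : ℝ := x (l+1+1) with hc_def
    have hc_pos : 0 < c := hpos (l+1+1) him2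
    have hcs : c ≤ s := hx.2.1 (l+1)
    have hs'1 : s' ≤ 1 := hs'a.trans ha1
    have hxc : x' (l+1+1) = c := (hdiff (l+1+1) (by omega)).symm
    have hxm' : x' m = x m := (hdiff m (by omega)).symm
    -- formulas for factor at l+1
    have hB : muFactor n x (l+1) = c ^ n / (1 - (n:ℝ) * (s - c) * c ^ (n-1)) := by
      rw [muFactor_eq hn hc_pos, pcoef_def]
    have hB' : muFactor n x' (l+1) = c ^ n / (1 - (n:ℝ) * (s' - c) * c ^ (n-1)) := by
      have : 0 < x' (l+1+1) := by rw [hxc]; exact hc_pos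
      rw [muFactor_eq hn this, pcoef_def, hxc]
    have hBmono : c ^ n / (1 - (n:ℝ) * (s - c) * c ^ (n-1))
        ≤ c ^ n / (1 - (n:ℝ) * (s' - c) * c ^ (n-1)) := dB_mono hn hc_pos hcs hss' hs'1
    have hB0' : 0 ≤ c ^ n / (1 - (n:ℝ) * (s' - c) * c ^ (n-1)) := by
      rw [← hB']; exact muFactor_nonneg hx' hn (l+1)
    have hB1' : c ^ n / (1 - (n:ℝ) * (s' - c) * c ^ (n-1)) ≤ 1 := by
      rw [← hB']; exact muFactor_le_one hx' hn (l+1)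
    have hB's' : c ^ n / (1 - (n:ℝ) * (s' - c) * c ^ (n-1)) ≤ s' := by
      rw [← hB']; exact muFactor_le_left hx' hn (l+1)
    -- the tail product
    set R : ℝ := ∏ j ∈ Finset.Ico (l+1+1) m, muFactor n x j with hR_def
    have hRcongr : (∏ j ∈ Finset.Ico (l+1+1) m, muFactor n x' j) = R := by
      apply Finset.prod_congr rfl
      intro j hj
      rw [Finset.mem_Ico] at hj
      exact (muFactor_congr (n := n) (hdiff j (by omega)) (hdiff (j+1) (by omega))).symm
    have hR0 : 0 ≤ R := Finset.prod_nonneg fun j _ => muFactor_nonneg hx hn j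
    have hR1 : R ≤ 1 :=
      Finset.prod_le_one (fun j _ => muFactor_nonneg hx hn j)
        (fun j _ => muFactor_le_one hx hn j)
    set Q : ℝ := R * x m ^ n with hQ_def
    have hxmn0 : 0 ≤ x m ^ n := pow_nonneg (hx.nonneg m) n
    have hxmn1 : x m ^ n ≤ 1 := pow_le_one₀ (hx.nonneg m) (hx.le_one m)
    have hQ0 : 0 ≤ Q := mul_nonneg hR0 hxmn0
    have hQ1 : Q ≤ 1 := mul_le_one₀ hR1 hxmn0 hxmn1
    have hQc : Q ≤ c := by
      rcases eq_or_lt_of_le him2 with hme | hlt2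
      · -- m = l + 2 : R = 1, Q = x m ^ n ≤ x m = c
        rw [hQ_def, hR_def, ← hme]
        rw [Finset.Ico_self, Finset.prod_empty, one_mul]
        have : x (l+1+1) ^ n ≤ x (l+1+1) :=
          pow_le_of_le_one (hx.nonneg _) (hx.le_one _) (by omega)
        exact this
      · -- l + 2 < m : first factor of R is ≤ c
        have hsplit : R = muFactor n x (l+1+1) * ∏ j ∈ Finset.Ico (l+1+1+1) m, muFactor n x j :=
          Finset.prod_eq_prod_Ico_succ_bot hlt2 _
        have hR2 : (∏ j ∈ Finset.Ico (l+1+1+1) m, muFactor n x j) ≤ 1 :=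
          Finset.prod_le_one (fun j _ => muFactor_nonneg hx hn j)
            (fun j _ => muFactor_le_one hx hn j)
        have hR20 : 0 ≤ ∏ j ∈ Finset.Ico (l+1+1+1) m, muFactor n x j :=
          Finset.prod_nonneg fun j _ => muFactor_nonneg hx hn j
        have hfc : muFactor n x (l+1+1) ≤ c := by
          have := muFactor_le_left hx hn (l+1+1)
          rw [← hc_def] at this
          exact this
        have hfc0 : 0 ≤ muFactor n x (l+1+1) := muFactor_nonneg hx hn _
        have hRc : R ≤ c := by
          rw [hsplit]
          calc muFactor n x (l+1+1) * ∏ j ∈ Finset.Ico (l+1+1+1) m, muFactor n x j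
              ≤ muFactor n x (l+1+1) * 1 := mul_le_mul_of_nonneg_left hR2 hfc0
            _ = muFactor n x (l+1+1) := mul_one _
            _ ≤ c := hfc
        rw [hQ_def]
        calc R * x m ^ n ≤ R * 1 := mul_le_mul_of_nonneg_left hxmn1 hR0
          _ = R := mul_one _
          _ ≤ c := hRc
    -- decomposition of fv
    have emu : mu n x m = mu n x l * muFactor n x l * muFactor n x (l+1) * R := by
      rw [hR_def]
      simp only [mu]
      rw [← Finset.prod_range_mul_prod_Ico (muFactor n x) him2]
      rw [Finset.prod_range_succ, Finset.prod_range_succ]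
    have emu' : mu n x' m = mu n x l * muFactor n x' l * muFactor n x' (l+1) * R := by
      have h0 : mu n x' m = mu n x' l * muFactor n x' l * muFactor n x' (l+1)
          * ∏ j ∈ Finset.Ico (l+1+1) m, muFactor n x' j := by
        simp only [mu]
        rw [← Finset.prod_range_mul_prod_Ico (muFactor n x') him2]
        rw [Finset.prod_range_succ, Finset.prod_range_succ]
      rw [h0, hRcongr, hPcongr]
    have e1 : fv n x m = mu n x l
        * ((s ^ n / (1 - (n:ℝ) * (a - s) * s ^ (n-1)))
          * (c ^ n / (1 - (n:ℝ) * (s - c) * c ^ (n-1)))) * Q := by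
      rw [fv, emu, hA, hB, hQ_def]; ring
    have e2 : fv n x' m = mu n x l
        * ((s' ^ n / (1 - (n:ℝ) * (a - s') * s' ^ (n-1)))
          * (c ^ n / (1 - (n:ℝ) * (s' - c) * c ^ (n-1)))) * Q := by
      rw [fv, emu', hA', hB', hxm', hQ_def]; ring
    -- difference of the middle products
    have hABmono : 0 ≤ (s' ^ n / (1 - (n:ℝ) * (a - s') * s' ^ (n-1)))
          * (c ^ n / (1 - (n:ℝ) * (s' - c) * c ^ (n-1)))
        - (s ^ n / (1 - (n:ℝ) * (a - s) * s ^ (n-1)))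
          * (c ^ n / (1 - (n:ℝ) * (s - c) * c ^ (n-1))) := by
      have t1 := mul_le_mul hAmono hBmono (by
        rw [← hB]; exact muFactor_nonneg hx hn (l+1)) hA0'
      linarith
    have hABdiff : ((s' ^ n / (1 - (n:ℝ) * (a - s') * s' ^ (n-1)))
          * (c ^ n / (1 - (n:ℝ) * (s' - c) * c ^ (n-1)))
        - (s ^ n / (1 - (n:ℝ) * (a - s) * s ^ (n-1)))
          * (c ^ n / (1 - (n:ℝ) * (s - c) * c ^ (n-1)))) * Q ≤ 17 * n * (s' - s) := by
      have expand : ((s' ^ n / (1 - (n:ℝ) * (a - s') * s' ^ (n-1)))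
          * (c ^ n / (1 - (n:ℝ) * (s' - c) * c ^ (n-1)))
        - (s ^ n / (1 - (n:ℝ) * (a - s) * s ^ (n-1)))
          * (c ^ n / (1 - (n:ℝ) * (s - c) * c ^ (n-1)))) * Q
        = ((s' ^ n / (1 - (n:ℝ) * (a - s') * s' ^ (n-1))
            - s ^ n / (1 - (n:ℝ) * (a - s) * s ^ (n-1)))
            * (c ^ n / (1 - (n:ℝ) * (s' - c) * c ^ (n-1)))) * Q
          + (s ^ n / (1 - (n:ℝ) * (a - s) * s ^ (n-1)))
            * ((c ^ n / (1 - (n:ℝ) * (s' - c) * c ^ (n-1))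
              - c ^ n / (1 - (n:ℝ) * (s - c) * c ^ (n-1))) * Q) := by ring
      have t1 := dA_lip (n := n) hn hs_pos hss' hs'a ha1 hB0' hB1' hB's'
      have t1Q : ((s' ^ n / (1 - (n:ℝ) * (a - s') * s' ^ (n-1))
            - s ^ n / (1 - (n:ℝ) * (a - s) * s ^ (n-1)))
            * (c ^ n / (1 - (n:ℝ) * (s' - c) * c ^ (n-1)))) * Q
          ≤ 16 * n * (s' - s) := by
        have hchain : ((s' ^ n / (1 - (n:ℝ) * (a - s') * s' ^ (n-1))
            - s ^ n / (1 - (n:ℝ) * (a - s) * s ^ (n-1)))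
            * (c ^ n / (1 - (n:ℝ) * (s' - c) * c ^ (n-1)))) * Q
          ≤ ((s' ^ n / (1 - (n:ℝ) * (a - s') * s' ^ (n-1))
            - s ^ n / (1 - (n:ℝ) * (a - s) * s ^ (n-1)))
            * (c ^ n / (1 - (n:ℝ) * (s' - c) * c ^ (n-1)))) * 1 := by
          apply mul_le_mul_of_nonneg_left hQ1
          exact mul_nonneg (by linarith [hAmono]) hB0'
        rw [mul_one] at hchain
        linarith
      have t2 := dB_lip (n := n) hn hc_pos hcs hss' hs'1 hQ0 hQc
      have t2A : (s ^ n / (1 - (n:ℝ) * (a - s) * s ^ (n-1)))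
            * ((c ^ n / (1 - (n:ℝ) * (s' - c) * c ^ (n-1))
              - c ^ n / (1 - (n:ℝ) * (s - c) * c ^ (n-1))) * Q)
          ≤ (n:ℝ) * (s' - s) := by
        have hBQ0 : 0 ≤ (c ^ n / (1 - (n:ℝ) * (s' - c) * c ^ (n-1))
              - c ^ n / (1 - (n:ℝ) * (s - c) * c ^ (n-1))) * Q :=
          mul_nonneg (by linarith [hBmono]) hQ0
        calc (s ^ n / (1 - (n:ℝ) * (a - s) * s ^ (n-1)))
            * ((c ^ n / (1 - (n:ℝ) * (s' - c) * c ^ (n-1))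
              - c ^ n / (1 - (n:ℝ) * (s - c) * c ^ (n-1))) * Q)
            ≤ 1 * ((c ^ n / (1 - (n:ℝ) * (s' - c) * c ^ (n-1))
              - c ^ n / (1 - (n:ℝ) * (s - c) * c ^ (n-1))) * Q) :=
              mul_le_mul_of_nonneg_right hA1 hBQ0
          _ = (c ^ n / (1 - (n:ℝ) * (s' - c) * c ^ (n-1))
              - c ^ n / (1 - (n:ℝ) * (s - c) * c ^ (n-1))) * Q := one_mul _
          _ ≤ (n:ℝ) * (s' - s) := t2
      have hcast : (0:ℝ) ≤ (n:ℝ) := Nat.cast_nonneg n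
      have hss0 : (0:ℝ) ≤ s' - s := by linarith
      rw [expand]
      linarith [t1Q, t2A]
    constructor
    · rw [e1, e2]
      have key : mu n x l * ((s ^ n / (1 - (n:ℝ) * (a - s) * s ^ (n-1)))
            * (c ^ n / (1 - (n:ℝ) * (s - c) * c ^ (n-1)))) * Q
          ≤ mu n x l * ((s' ^ n / (1 - (n:ℝ) * (a - s') * s' ^ (n-1)))
            * (c ^ n / (1 - (n:ℝ) * (s' - c) * c ^ (n-1)))) * Q := by
        apply mul_le_mul_of_nonneg_right _ hQ0
        apply mul_le_mul_of_nonneg_left _ hP0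
        linarith [hABmono]
      linarith
    · rw [e1, e2]
      have hd : mu n x l * ((s' ^ n / (1 - (n:ℝ) * (a - s') * s' ^ (n-1)))
            * (c ^ n / (1 - (n:ℝ) * (s' - c) * c ^ (n-1)))) * Q
          - mu n x l * ((s ^ n / (1 - (n:ℝ) * (a - s) * s ^ (n-1)))
            * (c ^ n / (1 - (n:ℝ) * (s - c) * c ^ (n-1)))) * Q
          = mu n x l * (((s' ^ n / (1 - (n:ℝ) * (a - s') * s' ^ (n-1)))
            * (c ^ n / (1 - (n:ℝ) * (s' - c) * c ^ (n-1)))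
            - (s ^ n / (1 - (n:ℝ) * (a - s) * s ^ (n-1)))
            * (c ^ n / (1 - (n:ℝ) * (s - c) * c ^ (n-1)))) * Q) := by ring
      rw [hd]
      have hABQ0 : 0 ≤ ((s' ^ n / (1 - (n:ℝ) * (a - s') * s' ^ (n-1)))
            * (c ^ n / (1 - (n:ℝ) * (s' - c) * c ^ (n-1)))
            - (s ^ n / (1 - (n:ℝ) * (a - s) * s ^ (n-1)))
            * (c ^ n / (1 - (n:ℝ) * (s - c) * c ^ (n-1)))) * Q :=
        mul_nonneg hABmono hQ0
      have h1 : mu n x l * (((s' ^ n / (1 - (n:ℝ) * (a - s') * s' ^ (n-1)))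
            * (c ^ n / (1 - (n:ℝ) * (s' - c) * c ^ (n-1)))
            - (s ^ n / (1 - (n:ℝ) * (a - s) * s ^ (n-1)))
            * (c ^ n / (1 - (n:ℝ) * (s - c) * c ^ (n-1)))) * Q)
          ≤ 1 * (17 * n * (s' - s)) := mul_le_mul hP1 hABdiff hABQ0 (by norm_num)
      have hcast : (0:ℝ) ≤ (n:ℝ) := Nat.cast_nonneg n
      have hss0 : (0:ℝ) ≤ s' - s := by linarith
      have hm1 : (0:ℝ) ≤ (n:ℝ) * (s' - s) := mul_nonneg hcast hss0
      have : (17:ℝ) * n * (s' - s) ≤ 18 * n * (s' - s) := by linarith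
      linarith

end Single

section Interp

variable {n : ℕ}

/-- hybrid sequence -/
def hyb (x y : ℕ → ℝ) (i : ℕ) : ℕ → ℝ := fun j => if j ≤ i then y j else x j

theorem hyb_gseq {x y : ℕ → ℝ} (hx : gseq x) (hy : gseq y) (hxy : ∀ j, x j ≤ y j) (i : ℕ) :
    gseq (hyb x y i) := by
  refine ⟨?_, ?_, ?_⟩
  · simp only [hyb, if_pos (Nat.zero_le i)]; exact hy.1
  · intro k
    by_cases h1 : k + 1 ≤ i
    · simp only [hyb, if_pos h1, if_pos (by omega : k ≤ i)]; exact hy.2.1 k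
    · by_cases h2 : k ≤ i
      · simp only [hyb, if_neg h1, if_pos h2]
        exact (hx.2.1 k).trans (hxy k)
      · simp only [hyb, if_neg h1, if_neg h2]; exact hx.2.1 k
  · intro k
    by_cases h : k ≤ i
    · simp only [hyb, if_pos h]; exact hy.nonneg k
    · simp only [hyb, if_neg h]; exact hx.nonneg k

theorem hyb_le {x y : ℕ → ℝ} (hxy : ∀ j, x j ≤ y j) (i : ℕ) (j : ℕ) :
    x j ≤ hyb x y i j := by
  by_cases h : j ≤ i
  · simp only [hyb, if_pos h]; exact hxy j
  · simp only [hyb, if_neg h]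
    exact le_rfl

/-- multi-coordinate monotonicity and Lipschitz bound for `fv`. -/
theorem fv_interp (hn : 1 ≤ n) {x y : ℕ → ℝ} (hx : gseq x) (hy : gseq y)
    (hxy : ∀ j, x j ≤ y j) {m : ℕ} {δ : ℝ} (hδ0 : 0 ≤ δ)
    (hδ : ∀ j, 1 ≤ j → j ≤ m → y j - x j ≤ δ) :
    0 ≤ fv n y m - fv n x m ∧ fv n y m - fv n x m ≤ 18 * n * m * δ := by
  have key : ∀ i, i ≤ m →
      0 ≤ fv n (hyb x y i) m - fv n x m ∧
        fv n (hyb x y i) m - fv n x m ≤ 18 * n * i * δ := by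
    intro i
    induction i with
    | zero =>
      intro _
      have he : fv n (hyb x y 0) m = fv n x m := by
        apply fv_congr
        intro j hj
        by_cases h : j = 0
        · subst h; simp only [hyb, if_pos le_rfl, hx.1, hy.1]
        · simp only [hyb, if_neg (by omega : ¬ j ≤ 0)]
      rw [he]
      norm_num
    | succ i ih =>
      intro him
      have ihm := ih (by omega)
      have hstep := fv_single (x := hyb x y i) (x' := hyb x y (i+1)) hn
        (hyb_gseq hx hy hxy i) (hyb_gseq hx hy hxy (i+1))
        (i := i+1) (m := m) (by omega) him
        (fun j hj => by
          by_cases h : j ≤ i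
          · simp only [hyb, if_pos h, if_pos (by omega : j ≤ i+1)]
          · simp only [hyb, if_neg h, if_neg (by omega : ¬ j ≤ i+1)])
        (by
          simp only [hyb, if_neg (by omega : ¬ i+1 ≤ i), if_pos (le_refl (i+1))]
          exact hxy (i+1))
      have hvals : hyb x y i (i+1) = x (i+1) ∧ hyb x y (i+1) (i+1) = y (i+1) := by
        constructor
        · simp only [hyb, if_neg (by omega : ¬ i+1 ≤ i)]
        · simp only [hyb, if_pos (le_refl (i+1))]
      rw [hvals.1, hvals.2] at hstep
      have hδi : y (i+1) - x (i+1) ≤ δ := hδ (i+1) (by omega) him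
      constructor
      · linarith [ihm.1, hstep.1]
      · have h1 : fv n (hyb x y (i+1)) m - fv n (hyb x y i) m ≤ 18 * n * δ := by
          have := hstep.2
          have hc : (0:ℝ) ≤ 18 * n := by positivity
          nlinarith
        have : (18:ℝ) * n * (i+1) * δ = 18 * n * i * δ + 18 * n * δ := by ring
        rw [show ((i:ℕ)+1 : ℕ) = i + 1 from rfl]
        push_cast
        push_cast at ihm
        linarith
  have hm := key m le_rfl
  have he : fv n (hyb x y m) m = fv n y m := by
    apply fv_congr
    intro j hj
    simp only [hyb, if_pos hj]
  rw [he] at hm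
  exact hm

/-- monotonicity of `mu` in a single coordinate (positive branch). -/
theorem mu_single_mono (hn : 1 ≤ n) {x x' : ℕ → ℝ} (hx : gseq x) (hx' : gseq x')
    {i K : ℕ} (hi1 : 1 ≤ i) (hiK : i ≤ K)
    (hdiff : ∀ j, j ≠ i → x j = x' j) (hle : x i ≤ x' i) (hpos : 0 < x K) :
    mu n x K ≤ mu n x' K := by
  have hposj : ∀ j, j ≤ K → 0 < x j := fun j hj => lt_of_lt_of_le hpos (hx.anti hj)
  have hxle' : ∀ j, x j ≤ x' j := by
    intro j
    by_cases h : j = i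
    · subst h; exact hle
    · exact (hdiff j h).le
  have hposj' : ∀ j, j ≤ K → 0 < x' j := fun j hj => lt_of_lt_of_le (hposj j hj) (hxle' j)
  obtain ⟨l, rfl⟩ : ∃ l, i = l + 1 := ⟨i - 1, by omega⟩
  have hxl : x' l = x l := (hdiff l (by omega)).symm
  have hPcongr : mu n x' l = mu n x l := mu_congr fun j hj => (hdiff j (by omega)).symm
  have hP0 : 0 ≤ mu n x l := mu_nonneg hx hn l
  have hs_pos : 0 < x (l+1) := hposj (l+1) hiK
  have hs_pos' : 0 < x' (l+1) := hposj' (l+1) hiK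
  have hA : muFactor n x l = x (l+1) ^ n / (1 - (n:ℝ) * (x l - x (l+1)) * x (l+1) ^ (n-1)) := by
    rw [muFactor_eq hn hs_pos, pcoef_def]
  have hA' : muFactor n x' l
      = x' (l+1) ^ n / (1 - (n:ℝ) * (x l - x' (l+1)) * x' (l+1) ^ (n-1)) := by
    rw [muFactor_eq hn hs_pos', pcoef_def, hxl]
  have hs'a : x' (l+1) ≤ x l := by rw [← hxl]; exact hx'.2.1 l
  have hAmono : muFactor n x l ≤ muFactor n x' l := by
    rw [hA, hA']
    exact dA_mono hn hs_pos hle hs'a (hx.le_one l)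
  have hA0 : 0 ≤ muFactor n x l := muFactor_nonneg hx hn l
  rcases eq_or_lt_of_le hiK with hieq | hlt
  · -- i = K
    rw [← hieq, mu_succ, mu_succ, hPcongr]
    exact mul_le_mul_of_nonneg_left hAmono hP0
  · -- i < K
    have him2 : l + 1 + 1 ≤ K := hlt
    have hc_pos : 0 < x (l+1+1) := hposj _ him2
    have hxc : x' (l+1+1) = x (l+1+1) := (hdiff (l+1+1) (by omega)).symm
    have hB : muFactor n x (l+1)
        = x (l+1+1) ^ n / (1 - (n:ℝ) * (x (l+1) - x (l+1+1)) * x (l+1+1) ^ (n-1)) := by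
      rw [muFactor_eq hn hc_pos, pcoef_def]
    have hB' : muFactor n x' (l+1)
        = x (l+1+1) ^ n / (1 - (n:ℝ) * (x' (l+1) - x (l+1+1)) * x (l+1+1) ^ (n-1)) := by
      have : 0 < x' (l+1+1) := by rw [hxc]; exact hc_pos
      rw [muFactor_eq hn this, pcoef_def, hxc]
    have hBmono : muFactor n x (l+1) ≤ muFactor n x' (l+1) := by
      rw [hB, hB']
      exact dB_mono hn hc_pos (hx.2.1 (l+1)) hle (hx'.le_one (l+1))
    have hB0 : 0 ≤ muFactor n x (l+1) := muFactor_nonneg hx hn (l+1)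
    have hRcongr : (∏ j ∈ Finset.Ico (l+1+1) K, muFactor n x' j)
        = ∏ j ∈ Finset.Ico (l+1+1) K, muFactor n x j := by
      apply Finset.prod_congr rfl
      intro j hj
      rw [Finset.mem_Ico] at hj
      exact (muFactor_congr (n := n) (hdiff j (by omega)) (hdiff (j+1) (by omega))).symm
    have hR0 : 0 ≤ ∏ j ∈ Finset.Ico (l+1+1) K, muFactor n x j :=
      Finset.prod_nonneg fun j _ => muFactor_nonneg hx hn j
    have emu : mu n x K = mu n x l * muFactor n x l * muFactor n x (l+1)
        * ∏ j ∈ Finset.Ico (l+1+1) K, muFactor n x j := by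
      simp only [mu]
      rw [← Finset.prod_range_mul_prod_Ico (muFactor n x) him2]
      rw [Finset.prod_range_succ, Finset.prod_range_succ]
    have emu' : mu n x' K = mu n x l * muFactor n x' l * muFactor n x' (l+1)
        * ∏ j ∈ Finset.Ico (l+1+1) K, muFactor n x j := by
      have h0 : mu n x' K = mu n x' l * muFactor n x' l * muFactor n x' (l+1)
          * ∏ j ∈ Finset.Ico (l+1+1) K, muFactor n x' j := by
        simp only [mu]
        rw [← Finset.prod_range_mul_prod_Ico (muFactor n x') him2]
        rw [Finset.prod_range_succ, Finset.prod_range_succ]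
      rw [h0, hRcongr, hPcongr]
    rw [emu, emu']
    have hAB : mu n x l * muFactor n x l * muFactor n x (l+1)
        ≤ mu n x l * muFactor n x' l * muFactor n x' (l+1) := by
      have h1 : mu n x l * muFactor n x l ≤ mu n x l * muFactor n x' l :=
        mul_le_mul_of_nonneg_left hAmono hP0
      have h2 : 0 ≤ mu n x l * muFactor n x l := mul_nonneg hP0 hA0
      exact mul_le_mul h1 hBmono hB0 (mul_nonneg hP0 (hA0.trans hAmono))
    exact mul_le_mul_of_nonneg_right hAB hR0

end Interp

section Kamke

variable {n : ℕ}

/-- single-coordinate Kamke monotonicity for `G_k = fv (k-1) - fv k` (coordinate `i ≤ k-1`,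
with coordinate `k` fixed since `i ≠ k`). -/
theorem G_single (hn : 1 ≤ n) {x x' : ℕ → ℝ} (hx : gseq x) (hx' : gseq x')
    {i K : ℕ} (hi1 : 1 ≤ i) (hiK : i ≤ K)
    (hdiff : ∀ j, j ≠ i → x j = x' j) (hle : x i ≤ x' i) :
    fv n x K - fv n x (K+1) ≤ fv n x' K - fv n x' (K+1) := by
  have hxle' : ∀ j, x j ≤ x' j := by
    intro j
    by_cases h : j = i
    · subst h; exact hle
    · exact (hdiff j h).le
  have hK1 : x' (K+1) = x (K+1) := (hdiff (K+1) (by omega)).symm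
  by_cases hb : x (K+1) ≤ 0
  · -- x (K+1) = 0 : both fv at K+1 vanish
    have hb0 : x (K+1) = 0 := le_antisymm hb (hx.nonneg _)
    have e1 : fv n x (K+1) = 0 := by rw [fv, hb0, zero_pow (by omega), zero_mul]
    have e2 : fv n x' (K+1) = 0 := by rw [fv, hK1, hb0, zero_pow (by omega), zero_mul]
    rw [e1, e2, sub_zero, sub_zero]
    exact (fv_single hn hx hx' hi1 hiK hdiff hle).1 |> fun h => by linarith
  push_neg at hb
  -- positive branch
  have hposK : 0 < x K := lt_of_lt_of_le hb (hx.2.1 K)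
  have hposK' : 0 < x' (K+1) := by rw [hK1]; exact hb
  -- G x = mu n x K * Br (x K), with b = x (K+1)
  have hfvK1 : fv n x (K+1) = mu n x K
      * (x (K+1) ^ n * (x (K+1) ^ n
        / (1 - (n:ℝ) * (x K - x (K+1)) * x (K+1) ^ (n-1)))) := by
    rw [fv, mu_succ, muFactor_eq hn hb, pcoef_def]; ring
  have hfvK1' : fv n x' (K+1) = mu n x' K
      * (x (K+1) ^ n * (x (K+1) ^ n
        / (1 - (n:ℝ) * (x' K - x (K+1)) * x (K+1) ^ (n-1)))) := by
    rw [fv, mu_succ, muFactor_eq hn hposK', pcoef_def, hK1]; ring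
  have hfvK : fv n x K = mu n x K * x K ^ n := by rw [fv]; ring
  have hfvK' : fv n x' K = mu n x' K * x' K ^ n := by rw [fv]; ring
  rw [hfvK, hfvK', hfvK1, hfvK1']
  have hGx : mu n x K * x K ^ n - mu n x K
      * (x (K+1) ^ n * (x (K+1) ^ n
        / (1 - (n:ℝ) * (x K - x (K+1)) * x (K+1) ^ (n-1))))
      = mu n x K * (x K ^ n - x (K+1) ^ n * x (K+1) ^ n
        / (1 - (n:ℝ) * (x K - x (K+1)) * x (K+1) ^ (n-1))) := by
    rw [mul_sub]
    congr 1
    rw [mul_div_assoc]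
    ring
  have hGx' : mu n x' K * x' K ^ n - mu n x' K
      * (x (K+1) ^ n * (x (K+1) ^ n
        / (1 - (n:ℝ) * (x' K - x (K+1)) * x (K+1) ^ (n-1))))
      = mu n x' K * (x' K ^ n - x (K+1) ^ n * x (K+1) ^ n
        / (1 - (n:ℝ) * (x' K - x (K+1)) * x (K+1) ^ (n-1))) := by
    rw [mul_sub]
    congr 1
    rw [mul_div_assoc]
    ring
  rw [hGx, hGx']
  have hxK1 : x K ≤ 1 := hx.le_one K
  have hxK1' : x' K ≤ 1 := hx'.le_one K
  have hbK : x (K+1) ≤ x K := hx.2.1 K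
  have hBr0 : 0 ≤ x K ^ n - x (K+1) ^ n * x (K+1) ^ n
      / (1 - (n:ℝ) * (x K - x (K+1)) * x (K+1) ^ (n-1)) :=
    dBr_nonneg hn hb hbK hxK1
  have hmu0 : 0 ≤ mu n x K := mu_nonneg hx hn K
  rcases eq_or_lt_of_le hiK with hieq | hlt
  · -- i = K : both mu and Br move
    subst hieq
    obtain ⟨l, rfl⟩ : ∃ l, i = l + 1 := ⟨i - 1, by omega⟩
    have hxl : x' l = x l := (hdiff l (by omega)).symm
    have hPcongr : mu n x' l = mu n x l := mu_congr fun j hj => (hdiff j (by omega)).symm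
    have hP0 : 0 ≤ mu n x l := mu_nonneg hx hn l
    have hs_pos : 0 < x (l+1) := hposK
    have hs_pos' : 0 < x' (l+1) := lt_of_lt_of_le hs_pos (hxle' _)
    have hA : muFactor n x l
        = x (l+1) ^ n / (1 - (n:ℝ) * (x l - x (l+1)) * x (l+1) ^ (n-1)) := by
      rw [muFactor_eq hn hs_pos, pcoef_def]
    have hA' : muFactor n x' l
        = x' (l+1) ^ n / (1 - (n:ℝ) * (x l - x' (l+1)) * x' (l+1) ^ (n-1)) := by
      rw [muFactor_eq hn hs_pos', pcoef_def, hxl]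
    have hs'a : x' (l+1) ≤ x l := by
      rw [hdiff l (by omega : l ≠ l + 1)]
      exact hx'.2.1 l
    have hAmono : muFactor n x l ≤ muFactor n x' l := by
      rw [hA, hA']
      exact dA_mono hn hs_pos hle hs'a (hx.le_one l)
    have hA0 : 0 ≤ muFactor n x l := muFactor_nonneg hx hn l
    have hBrmono : x (l+1) ^ n - x (l+1+1) ^ n * x (l+1+1) ^ n
          / (1 - (n:ℝ) * (x (l+1) - x (l+1+1)) * x (l+1+1) ^ (n-1))
        ≤ x' (l+1) ^ n - x (l+1+1) ^ n * x (l+1+1) ^ n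
          / (1 - (n:ℝ) * (x' (l+1) - x (l+1+1)) * x (l+1+1) ^ (n-1)) :=
      dBr_mono hn hb hbK hle (hx'.le_one (l+1))
    have hBrmono0 : 0 ≤ x' (l+1) ^ n - x (l+1+1) ^ n * x (l+1+1) ^ n
          / (1 - (n:ℝ) * (x' (l+1) - x (l+1+1)) * x (l+1+1) ^ (n-1)) :=
      le_trans hBr0 hBrmono
    rw [mu_succ, mu_succ, hPcongr]
    have step : mu n x l * muFactor n x l
        * (x (l+1) ^ n - x (l+1+1) ^ n * x (l+1+1) ^ n
          / (1 - (n:ℝ) * (x (l+1) - x (l+1+1)) * x (l+1+1) ^ (n-1)))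
        ≤ mu n x l * muFactor n x' l
        * (x' (l+1) ^ n - x (l+1+1) ^ n * x (l+1+1) ^ n
          / (1 - (n:ℝ) * (x' (l+1) - x (l+1+1)) * x (l+1+1) ^ (n-1))) := by
      apply mul_le_mul
      · exact mul_le_mul_of_nonneg_left hAmono hP0
      · exact hBrmono
      · exact hBr0
      · exact mul_nonneg hP0 (hA0.trans hAmono)
    exact step
  · -- i < K : only mu moves, Br is fixed
    have hxK : x' K = x K := (hdiff K (by omega)).symm
    rw [hxK]
    have hmumono : mu n x K ≤ mu n x' K :=
      mu_single_mono hn hx hx' hi1 (by omega) hdiff hle hposK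
    exact mul_le_mul_of_nonneg_right hmumono hBr0

/-- Kamke condition for `G_k`, multi-coordinate. -/
theorem G_kamke (hn : 1 ≤ n) {x w : ℕ → ℝ} (hx : gseq x) (hw : gseq w)
    (hxw : ∀ j, x j ≤ w j) {K : ℕ} (hkk : x (K+1) = w (K+1)) :
    fv n x K - fv n x (K+1) ≤ fv n w K - fv n w (K+1) := by
  have key : ∀ i, i ≤ K →
      fv n x K - fv n x (K+1) ≤ fv n (hyb x w i) K - fv n (hyb x w i) (K+1) := by
    intro i
    induction i with
    | zero =>
      intro _
      have he : ∀ M, M ≤ K + 1 → fv n (hyb x w 0) M = fv n x M := by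
        intro M hM
        apply fv_congr
        intro j hj
        by_cases h : j = 0
        · subst h; simp only [hyb, if_pos le_rfl, hx.1, hw.1]
        · simp only [hyb, if_neg (by omega : ¬ j ≤ 0)]
      rw [he K (by omega), he (K+1) le_rfl]
    | succ i ih =>
      intro him
      have ihm := ih (by omega)
      have hstep := G_single (x := hyb x w i) (x' := hyb x w (i+1)) hn
        (hyb_gseq hx hw hxw i) (hyb_gseq hx hw hxw (i+1))
        (i := i+1) (K := K) (by omega) him
        (fun j hj => by
          by_cases h : j ≤ i
          · simp only [hyb, if_pos h, if_pos (by omega : j ≤ i+1)]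
          · simp only [hyb, if_neg h, if_neg (by omega : ¬ j ≤ i+1)])
        (by
          simp only [hyb, if_neg (by omega : ¬ i+1 ≤ i), if_pos (le_refl (i+1))]
          exact hxw (i+1))
      linarith
  have hK := key K le_rfl
  have he : ∀ M, M ≤ K + 1 → fv n (hyb x w K) M = fv n w M := by
    intro M hM
    apply fv_congr
    intro j hj
    by_cases h : j ≤ K
    · simp only [hyb, if_pos h]
    · have hj1 : j = K + 1 := by omega
      simp only [hyb, if_neg h]
      rw [hj1]
      exact hkk
  rw [he K (by omega), he (K+1) le_rfl] at hK
  exact hK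

end Kamke

section Field

variable {n : ℕ} {lam : ℝ}

theorem vfield_eq (x : ℕ → ℝ) (k : ℕ) :
    vfield lam n x k = lam * fv n x (k-1) - lam * fv n x k - (x k - x (k+1)) := by
  rw [vfield, fv, fv]; ring

theorem ufield_lt {d k : ℕ} (hkd : k < d) (x : ℕ → ℝ) :
    ufield lam n d x k = lam * fv n x (k-1) - lam * fv n x k - (x k - x (k+1)) := by
  rw [ufield, if_pos hkd, vfield_eq]

theorem ufield_d {d : ℕ} (x : ℕ → ℝ) :
    ufield lam n d x d = lam * fv n x (d-1) - lam * fv n x d - x d := by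
  rw [ufield, if_neg (lt_irrefl d), if_pos rfl, fv, fv]; ring

theorem vfield_sub_ufield {d : ℕ} (hd : 1 ≤ d) (x : ℕ → ℝ) :
    vfield lam n x d = ufield lam n d x d + x (d+1) := by
  rw [ufield_d, vfield_eq]; ring

/-- Kamke condition for the truncated field. -/
theorem ufield_kamke (hn : 1 ≤ n) (hlam : 0 ≤ lam) {d k : ℕ} (hk1 : 1 ≤ k) (hkd : k ≤ d)
    {x w : ℕ → ℝ} (hx : gseq x) (hw : gseq w) (hxw : ∀ j, x j ≤ w j) (hkk : x k = w k) :
    ufield lam n d x k ≤ ufield lam n d w k := by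
  obtain ⟨K, rfl⟩ : ∃ K, k = K + 1 := ⟨k - 1, by omega⟩
  have hG := G_kamke hn hx hw hxw (K := K) hkk
  have hKk : K + 1 - 1 = K := by omega
  have hlamG : lam * fv n x K - lam * fv n x (K+1)
      ≤ lam * fv n w K - lam * fv n w (K+1) := by
    have := mul_le_mul_of_nonneg_left hG hlam
    rw [mul_sub, mul_sub] at this
    linarith
  rcases eq_or_lt_of_le hkd with heq | hlt
  · rw [← heq, ufield_d, ufield_d, hKk]
    have : x (K+1) = w (K+1) := hkk
    linarith
  · rw [ufield_lt hlt, ufield_lt hlt, hKk]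
    have h2 : x (K+1+1) ≤ w (K+1+1) := hxw _
    have : x (K+1) = w (K+1) := hkk
    linarith

/-- one-sided Lipschitz bound for the truncated field. -/
theorem ufield_lip (hn : 1 ≤ n) (hlam : 0 ≤ lam) (hlam1 : lam ≤ 1)
    {d k : ℕ} (hk1 : 1 ≤ k) (hkd : k ≤ d)
    {y w : ℕ → ℝ} (hy : gseq y) (hw : gseq w) (hyw : ∀ j, y j ≤ w j)
    {δ : ℝ} (hδ0 : 0 ≤ δ) (hδ : ∀ j, 1 ≤ j → j ≤ d → w j - y j ≤ δ) :
    ufield lam n d w k - ufield lam n d y k ≤ (18 * n * d + 1) * δ := by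
  have hd1 : 1 ≤ d := le_trans hk1 hkd
  have hfv1 := fv_interp hn hy hw hyw (m := k - 1) hδ0
    (fun j hj1 hj2 => hδ j hj1 (by omega))
  have hfvk := fv_interp hn hy hw hyw (m := k) hδ0
    (fun j hj1 hj2 => hδ j hj1 (by omega))
  have hk1d : ((k:ℝ) - 1) ≤ (d:ℝ) := by
    have : (k:ℝ) ≤ (d:ℝ) := by exact_mod_cast hkd
    linarith
  have hcast : ((k - 1 : ℕ) : ℝ) ≤ (d:ℝ) := by
    have : (k - 1 : ℕ) ≤ d := by omega
    exact_mod_cast this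
  have h1 : lam * (fv n w (k-1) - fv n y (k-1)) ≤ 18 * n * d * δ := by
    have hb : fv n w (k-1) - fv n y (k-1) ≤ 18 * n * (k-1 : ℕ) * δ := hfv1.2
    have hb2 : (18:ℝ) * n * (k-1 : ℕ) * δ ≤ 18 * n * d * δ := by
      have hn0 : (0:ℝ) ≤ (n:ℝ) := Nat.cast_nonneg n
      have h5 : (18 * δ * (n:ℝ)) * ((k-1:ℕ):ℝ) ≤ (18 * δ * (n:ℝ)) * (d:ℝ) :=
        mul_le_mul_of_nonneg_left hcast (by positivity)
      nlinarith [h5]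
    have h3 : lam * (fv n w (k-1) - fv n y (k-1)) ≤ 1 * (fv n w (k-1) - fv n y (k-1)) :=
      mul_le_mul_of_nonneg_right hlam1 hfv1.1
    linarith
  have h2 : 0 ≤ lam * (fv n w k - fv n y k) := mul_nonneg hlam hfvk.1
  have hwk : y k ≤ w k := hyw k
  rcases eq_or_lt_of_le hkd with heq | hlt
  · subst heq
    rw [ufield_d, ufield_d]
    have e : lam * fv n w (k-1) - lam * fv n w k - w k
        - (lam * fv n y (k-1) - lam * fv n y k - y k)
        = lam * (fv n w (k-1) - fv n y (k-1)) - lam * (fv n w k - fv n y k)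
          - (w k - y k) := by ring
    rw [e]
    linarith [h1, h2, hwk]
  · rw [ufield_lt hlt, ufield_lt hlt]
    have e : lam * fv n w (k-1) - lam * fv n w k - (w k - w (k+1))
        - (lam * fv n y (k-1) - lam * fv n y k - (y k - y (k+1)))
        = lam * (fv n w (k-1) - fv n y (k-1)) - lam * (fv n w k - fv n y k)
          - (w k - y k) + (w (k+1) - y (k+1)) := by ring
    rw [e]
    have h4 : w (k+1) - y (k+1) ≤ δ := hδ (k+1) (by omega) (by omega)
    linarith [h1, h2, hwk]

end Field

section ODE

open Filter Topology

theorem contOn_sup' {f : ℕ → ℝ → ℝ} {U : Set ℝ} :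
    ∀ {S : Finset ℕ} (hS : S.Nonempty), (∀ k ∈ S, ContinuousOn (f k) U) →
      ContinuousOn (fun t => S.sup' hS fun k => f k t) U := by
  intro S hS
  induction hS using Finset.Nonempty.cons_induction with
  | singleton a =>
    intro hf
    simpa [Finset.sup'_singleton] using hf a (Finset.mem_singleton_self a)
  | cons a s ha hs ih =>
    intro hf
    have h1 : ContinuousOn (f a) U := hf a (Finset.mem_cons_self a s)
    have h2 := ih (fun k hk => hf k (Finset.mem_cons_of_mem hk))
    have he : (fun t => (Finset.cons a s ha).sup' (Finset.cons_nonempty ha) fun k => f k t)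
        = fun t => (f a t) ⊔ (s.sup' hs fun k => f k t) := by
      funext t
      rw [Finset.sup'_cons hs]
    rw [he]
    exact ContinuousOn.sup h1 h2

/-- The comparison lemma: a solution of the truncated system is dominated by any
supersolution. -/
theorem comp {lam : ℝ} (hlam0 : 0 ≤ lam) (hlam1 : lam ≤ 1) {n : ℕ} (hn : 1 ≤ n)
    {d : ℕ} (hd : 1 ≤ d) {x y : ℕ → ℝ → ℝ}
    (hxg : ∀ t : ℝ, 0 ≤ t → gseq (fun j => x j t))
    (hyg : ∀ t : ℝ, 0 ≤ t → gseq (fun j => y j t))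
    (hxd : ∀ k, 1 ≤ k → k ≤ d → ∀ t : ℝ, 0 ≤ t →
      HasDerivWithinAt (x k) (ufield lam n d (fun j => x j t) k) (Set.Ici 0) t)
    (hyd : ∀ k, 1 ≤ k → k ≤ d → ∀ t : ℝ, 0 ≤ t → ∃ g : ℝ,
      HasDerivWithinAt (y k) g (Set.Ici 0) t ∧ ufield lam n d (fun j => y j t) k ≤ g)
    (hinit : ∀ k, 1 ≤ k → k ≤ d → x k 0 ≤ y k 0) :
    ∀ k, 1 ≤ k → k ≤ d → ∀ t : ℝ, 0 ≤ t → x k t ≤ y k t := by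
  have hS : (Finset.Icc 1 d).Nonempty := ⟨1, Finset.mem_Icc.mpr ⟨le_rfl, hd⟩⟩
  set L : ℝ := 18 * n * d + 1 with hL_def
  have hL0 : 0 ≤ L := by positivity
  set Φ : ℝ → ℝ :=
    fun t => max ((Finset.Icc 1 d).sup' hS fun k => x k t - y k t) 0 with hΦ_def
  have hΦ0 : ∀ t, 0 ≤ Φ t := fun t => le_max_right _ _
  have hgk_le : ∀ t, ∀ k, 1 ≤ k → k ≤ d → x k t - y k t ≤ Φ t := by
    intro t k h1 h2
    exact le_trans (Finset.le_sup' (fun k => x k t - y k t) (Finset.mem_Icc.mpr ⟨h1, h2⟩))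
      (le_max_left _ _)
  -- the main Gronwall estimate
  have main : ∀ t : ℝ, 0 ≤ t → Φ t ≤ 0 := by
    intro t0 ht0
    have hcont : ∀ k ∈ Finset.Icc 1 d, ContinuousOn (fun t => x k t - y k t) (Set.Ici 0) := by
      intro k hk
      rw [Finset.mem_Icc] at hk
      intro t ht
      obtain ⟨g, hg, -⟩ := hyd k hk.1 hk.2 t ht
      exact ((hxd k hk.1 hk.2 t ht).continuousWithinAt).sub hg.continuousWithinAt
    have hsup : ContinuousOn (fun t => (Finset.Icc 1 d).sup' hS fun k => x k t - y k t)
        (Set.Icc 0 t0) := ContinuousOn.mono (contOn_sup' hS hcont) Set.Icc_subset_Ici_self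
    have hf : ContinuousOn Φ (Set.Icc 0 t0) := ContinuousOn.sup hsup continuousOn_const
    have ha : Φ 0 ≤ 0 := by
      apply max_le _ le_rfl
      apply Finset.sup'_le
      intro k hk
      rw [Finset.mem_Icc] at hk
      exact sub_nonpos.2 (hinit k hk.1 hk.2)
    have bound : ∀ s ∈ Set.Ico (0:ℝ) t0, (fun t => L * Φ t) s ≤ L * Φ s + 0 := by
      intro s _
      simp
    have hf' : ∀ s ∈ Set.Ico (0:ℝ) t0, ∀ r, (fun t => L * Φ t) s < r →
        ∃ᶠ z in 𝓝[>] s, (z - s)⁻¹ * (Φ z - Φ s) < r := by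
      intro t ht r hr
      simp only at hr
      have htI : (0:ℝ) ≤ t := ht.1
      have hr0 : 0 < r := lt_of_le_of_lt (mul_nonneg hL0 (hΦ0 t)) hr
      by_contra hcon
      rw [Filter.not_frequently] at hcon
      have hopt : ∀ z, Φ z = 0 ∨ ∃ k ∈ Finset.Icc 1 d, Φ z = x k z - y k z := by
        intro z
        rcases le_total ((Finset.Icc 1 d).sup' hS fun k => x k z - y k z) 0 with h | h
        · left; exact max_eq_right h
        · right
          obtain ⟨k, hk, hkeq⟩ := Finset.exists_mem_eq_sup' hS (fun k => x k z - y k z)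
          exact ⟨k, hk, by rw [hΦ_def]; simp only; rw [max_eq_left h, hkeq]⟩
      have hfreq : (∃ᶠ z in 𝓝[>] t, Φ z = 0) ∨
          ∃ k ∈ Finset.Icc 1 d, ∃ᶠ z in 𝓝[>] t, Φ z = x k z - y k z := by
        by_contra hno
        push_neg at hno
        obtain ⟨h0, hk⟩ := hno
        have hks : ∀ᶠ z in 𝓝[>] t, ∀ k ∈ Finset.Icc 1 d, ¬ Φ z = x k z - y k z := by
          rw [Filter.eventually_all_finset]
          intro k hkS
          have := hk k hkS
          exact this
        have hfalse : ∀ᶠ z in 𝓝[>] t, False := by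
          filter_upwards [h0, hks] with z hz1 hz2
          rcases hopt z with h | ⟨k, hkS, hkeq⟩
          · exact hz1 h
          · exact hz2 k hkS hkeq
        obtain ⟨z, hz⟩ := hfalse.exists
        exact hz
      rcases hfreq with h0 | ⟨k, hkS, hfk⟩
      · -- frequently Φ = 0 : slope is nonpositive there
        have hfr : ∃ᶠ z in 𝓝[>] t, (z - t)⁻¹ * (Φ z - Φ t) < r := by
          refine (h0.and_eventually eventually_mem_nhdsWithin).mono ?_
          rintro z ⟨hz0, hzt⟩
          have hzt' : 0 < z - t := sub_pos.2 hzt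
          rw [hz0, zero_sub]
          have : (z - t)⁻¹ * -Φ t ≤ 0 :=
            mul_nonpos_of_nonneg_of_nonpos (inv_nonneg.2 hzt'.le) (by linarith [hΦ0 t])
          linarith
        obtain ⟨z, hz1, hz2⟩ := (hfr.and_eventually hcon).exists
        exact hz2 hz1
      · -- frequently Φ z = x k z - y k z
        rw [Finset.mem_Icc] at hkS
        obtain ⟨hk1, hkd⟩ := hkS
        obtain ⟨g, hg, hgge⟩ := hyd k hk1 hkd t htI
        have hder : HasDerivWithinAt (fun z => x k z - y k z)
            (ufield lam n d (fun j => x j t) k - g) (Set.Ici 0) t :=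
          (hxd k hk1 hkd t htI).sub hg
        set D : ℝ := ufield lam n d (fun j => x j t) k - g with hD_def
        have htend : Tendsto (slope (fun z => x k z - y k z) t) (𝓝[>] t) (𝓝 D) := by
          have h1 := hasDerivWithinAt_iff_tendsto_slope.mp hder
          refine h1.mono_left (nhdsWithin_mono t ?_)
          intro z hz
          exact ⟨le_trans htI (le_of_lt hz), ne_of_gt hz⟩
        have hslope_eq : ∀ z, slope (fun z => x k z - y k z) t z
            = (z - t)⁻¹ * ((x k z - y k z) - (x k t - y k t)) := by
          intro z
          rw [slope_def_field]
          rw [div_eq_inv_mul]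
        have hgkΦ : x k t - y k t ≤ Φ t := hgk_le t k hk1 hkd
        rcases eq_or_lt_of_le hgkΦ with heq | hltΦ
        · -- the maximum is attained at k : use Kamke + Lipschitz
          have hDle : D ≤ L * Φ t := by
            have hXg := hxg t htI
            have hYg := hyg t htI
            have hWg : gseq (fun j => max (x j t) (y j t)) := by
              refine ⟨?_, ?_, ?_⟩
              · show max (x 0 t) (y 0 t) = 1
                have e1 : x 0 t = 1 := hXg.1
                have e2 : y 0 t = 1 := hYg.1
                rw [e1, e2, max_self]
              · intro j; exact max_le_max (hXg.2.1 j) (hYg.2.1 j)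
              · intro j; exact le_trans (hXg.nonneg j) (le_max_left _ _)
            have hYW : ∀ j, y j t ≤ max (x j t) (y j t) := fun j => le_max_right _ _
            have hXW : ∀ j, x j t ≤ max (x j t) (y j t) := fun j => le_max_left _ _
            have hXk : x k t = max (x k t) (y k t) := by
              have h1 : y k t ≤ x k t := by
                have := hΦ0 t
                rw [← heq] at this
                linarith
              exact (max_eq_left h1).symm
            have h1 : ufield lam n d (fun j => x j t) k
                ≤ ufield lam n d (fun j => max (x j t) (y j t)) k :=
              ufield_kamke hn hlam0 hk1 hkd hXg hWg hXW hXk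
            have h2 : ufield lam n d (fun j => max (x j t) (y j t)) k
                - ufield lam n d (fun j => y j t) k ≤ (18 * n * d + 1) * Φ t := by
              apply ufield_lip hn hlam0 hlam1 hk1 hkd hYg hWg hYW (hΦ0 t)
              intro j hj1 hj2
              rcases le_total (x j t) (y j t) with hc | hc
              · rw [max_eq_right hc]
                simpa using hΦ0 t
              · rw [max_eq_left hc]
                exact hgk_le t j hj1 hj2
            rw [hD_def, hL_def]
            linarith [hgge, h1, h2]
          have hDr : D < r := lt_of_le_of_lt hDle hr
          have hev : ∀ᶠ z in 𝓝[>] t, slope (fun z => x k z - y k z) t z < r :=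
            htend.eventually_lt_const hDr
          have hfr : ∃ᶠ z in 𝓝[>] t, (z - t)⁻¹ * (Φ z - Φ t) < r := by
            refine (hfk.and_eventually hev).mono ?_
            rintro z ⟨hzeq, hzs⟩
            rw [hzeq, ← heq]
            rw [hslope_eq z] at hzs
            exact hzs
          obtain ⟨z, hz1, hz2⟩ := (hfr.and_eventually hcon).exists
          exact hz2 hz1
        · -- the value at k is strictly below the max : slope tends to -∞
          have hev1 : ∀ᶠ z in 𝓝[>] t, slope (fun z => x k z - y k z) t z < D + 1 :=
            htend.eventually_lt_const (lt_add_one D)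
          have hev2 : ∀ᶠ z in 𝓝[>] t,
              (z - t)⁻¹ * ((x k t - y k t) - Φ t) < r - (D + 1) := by
            set c : ℝ := Φ t - (x k t - y k t) with hc_def
            have hc0 : 0 < c := by rw [hc_def]; linarith
            rcases le_or_gt (D + 1 - r) 0 with hcase | hcase
            · filter_upwards [eventually_mem_nhdsWithin] with z hz
              have hzt' : 0 < z - t := sub_pos.2 hz
              have hneg : (z - t)⁻¹ * ((x k t - y k t) - Φ t) < 0 :=
                mul_neg_of_pos_of_neg (inv_pos.2 hzt') (by linarith)
              linarith
            · have hmem : Set.Ioo t (t + c / (D + 1 - r)) ∈ 𝓝[>] t := by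
                apply Ioo_mem_nhdsGT
                have : 0 < c / (D + 1 - r) := div_pos hc0 hcase
                linarith
              filter_upwards [hmem] with z hz
              have h1 : 0 < z - t := sub_pos.2 hz.1
              have h2 : z - t < c / (D + 1 - r) := by
                have := hz.2
                linarith
              have h3 : (D + 1 - r) * (z - t) < c := by
                have h4 := (lt_div_iff₀ hcase).mp h2
                linarith [h4]
              have h5 : (x k t - y k t) - Φ t = -c := by rw [hc_def]; ring
              rw [h5]
              have h6 : (z - t)⁻¹ * (-c) = -(c / (z - t)) := by
                field_simp
              rw [h6]
              have h7 : D + 1 - r < c / (z - t) := by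
                rw [lt_div_iff₀ h1]
                linarith [h3]
              linarith
          have hfr : ∃ᶠ z in 𝓝[>] t, (z - t)⁻¹ * (Φ z - Φ t) < r := by
            refine (hfk.and_eventually (hev1.and hev2)).mono ?_
            rintro z ⟨hzeq, h1, h2⟩
            rw [hslope_eq z] at h1
            have hdecomp : (z - t)⁻¹ * (Φ z - Φ t)
                = (z - t)⁻¹ * ((x k z - y k z) - (x k t - y k t))
                  + (z - t)⁻¹ * ((x k t - y k t) - Φ t) := by
              rw [hzeq]; ring
            rw [hdecomp]
            linarith
          obtain ⟨z, hz1, hz2⟩ := (hfr.and_eventually hcon).exists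
          exact hz2 hz1
    have := le_gronwallBound_of_liminf_deriv_right_le hf hf' ha bound t0
      (Set.mem_Icc.mpr ⟨ht0, le_rfl⟩)
    rwa [gronwallBound_ε0_δ0] at this
  intro k hk1 hkd t ht
  have h1 : x k t - y k t ≤ Φ t := hgk_le t k hk1 hkd
  have h2 := main t ht
  linarith

end ODE

section Glue

theorem memD.gseq {z : ℕ → ℝ} (h : memD z) : gseq z :=
  ⟨h.1, h.2.1, fun k => (h.2.2.1 k).1⟩

theorem memDd.gseq {d : ℕ} {z : ℕ → ℝ} (h : memDd d z) : gseq z :=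
  ⟨h.1, h.2.1, fun k => (h.2.2.1 k).1⟩

theorem ufield_succ_eq {lam : ℝ} {n d k : ℕ} (hkd : k ≤ d) (y : ℕ → ℝ) :
    ufield lam n (d+1) y k = vfield lam n y k := by
  rw [ufield, if_pos (by omega : k < d + 1)]

theorem ufield_le_vfield {lam : ℝ} {n d k : ℕ} (hn : 1 ≤ n) (hk1 : 1 ≤ k) (hkd : k ≤ d)
    {y : ℕ → ℝ} (hy : gseq y) : ufield lam n d y k ≤ vfield lam n y k := by
  rcases eq_or_lt_of_le hkd with heq | hlt
  · subst heq
    rw [vfield_sub_ufield hk1]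
    have := hy.nonneg (k+1)
    linarith
  · rw [ufield, if_pos hlt]

end Glue


/-- the truncated solutions z^(d) started from (z_1(0),…,z_d(0),0,…) are
increasing in d, and bounded above by any solution w of ẇ = v(w) with z(0) ≤ w(0). -/
theorem stmt19 (lam : ℝ) (hlam0 : 0 < lam) (hlam1 : lam < 1) (n : ℕ) (hn : 1 ≤ n)
    (z0 : ℕ → ℝ) (hz0 : memD z0)
    (zd : ℕ → ℕ → ℝ → ℝ)
    (hzd : ∀ d, 1 ≤ d → IsSolutionTrunc lam n d (zd d) ∧
      ∀ k, 1 ≤ k → k ≤ d → zd d k 0 = z0 k) :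
    (∀ d, 1 ≤ d → ∀ k, 1 ≤ k → k ≤ d → ∀ t : ℝ, 0 ≤ t →
      zd d k t ≤ zd (d + 1) k t) ∧
    (∀ w : ℕ → ℝ → ℝ, IsSolution lam n w → (∀ k, 1 ≤ k → z0 k ≤ w k 0) →
      ∀ d, 1 ≤ d → ∀ k, 1 ≤ k → k ≤ d → ∀ t : ℝ, 0 ≤ t → zd d k t ≤ w k t) := by
  constructor
  · -- monotonicity in d
    intro d hd k hk1 hkd t ht
    obtain ⟨hsolx, hix⟩ := hzd d hd
    obtain ⟨hsoly, hiy⟩ := hzd (d+1) (by omega)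
    refine comp hlam0.le hlam1.le hn hd
      (fun t ht => (hsolx.1 t ht).gseq)
      (fun t ht => (hsoly.1 t ht).gseq)
      (fun k hk1 hkd t ht => hsolx.2 k hk1 t ht)
      (fun k hk1 hkd t ht => ?_)
      (fun k hk1 hkd => ?_) k hk1 hkd t ht
    · refine ⟨ufield lam n (d+1) (fun j => zd (d+1) j t) k, hsoly.2 k hk1 t ht, ?_⟩
      rw [ufield_succ_eq hkd]
      exact ufield_le_vfield hn hk1 hkd ((hsoly.1 t ht).gseq)
    · rw [hix k hk1 hkd, hiy k hk1 (by omega)]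
  · -- domination by a solution of the full system
    intro w hw hw0 d hd k hk1 hkd t ht
    obtain ⟨hsolx, hix⟩ := hzd d hd
    refine comp hlam0.le hlam1.le hn hd
      (fun t ht => (hsolx.1 t ht).gseq)
      (fun t ht => (hw.1 t ht).gseq)
      (fun k hk1 hkd t ht => hsolx.2 k hk1 t ht)
      (fun k hk1 hkd t ht => ?_)
      (fun k hk1 hkd => ?_) k hk1 hkd t ht
    · refine ⟨vfield lam n (fun j => w j t) k, hw.2 k hk1 t ht, ?_⟩
      exact ufield_le_vfield hn hk1 hkd ((hw.1 t ht).gseq)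
    · rw [hix k hk1 hkd]
      exact hw0 k hk1


end
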